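/- arXiv:math/0702480 — 5 statements merged into one kernel-verified Lean document; each statement's English description precedes it below -/
import Mathlib

section
/- Let γ ∈ GL₂⁺(ℝ) and let f : ℝ → ℂ be continuously differentiable and π-periodic. Then for every θ ∈ ℝ the function t ↦ f(γ·t) is differentiable at θ with derivative (det γ) · j(γ,θ)⁻² · f′(γ·θ). -/
noncomputable section

/-- `j(γ,θ) = ((a cos θ + b sin θ)² + (c cos θ + d sin θ)²)^{1/2}`. -/
def jmat (γ : Matrix (Fin 2) (Fin 2) ℝ) (θ : ℝ) : ℝ :=
  Real.sqrt ((γ 0 0 * Real.cos θ + γ 0 1 * Real.sin θ) ^ 2 +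
    (γ 1 0 * Real.cos θ + γ 1 1 * Real.sin θ) ^ 2)

def Zc (γ : Matrix (Fin 2) (Fin 2) ℝ) (t : ℝ) : ℂ :=
  ((γ 0 0 * Real.cos t + γ 0 1 * Real.sin t : ℝ) : ℂ) +
    ((γ 1 0 * Real.cos t + γ 1 1 * Real.sin t : ℝ) : ℂ) * Complex.I

lemma Zc_re (γ : Matrix (Fin 2) (Fin 2) ℝ) (t : ℝ) :
    (Zc γ t).re = γ 0 0 * Real.cos t + γ 0 1 * Real.sin t := by simp [Zc, Complex.cos_ofReal_re, Complex.sin_ofReal_re]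

lemma Zc_im (γ : Matrix (Fin 2) (Fin 2) ℝ) (t : ℝ) :
    (Zc γ t).im = γ 1 0 * Real.cos t + γ 1 1 * Real.sin t := by simp [Zc, Complex.cos_ofReal_re, Complex.sin_ofReal_re]

lemma Zc_ne_zero {γ : Matrix (Fin 2) (Fin 2) ℝ} (hγ : γ.det ≠ 0) (t : ℝ) : Zc γ t ≠ 0 := by
  intro h
  have hre := congrArg Complex.re h
  have him := congrArg Complex.im h
  rw [Zc_re] at hre
  rw [Zc_im] at him
  simp only [Complex.zero_re, Complex.zero_im] at hre him
  rw [Matrix.det_fin_two] at hγ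
  have h1 : (γ 0 0 * γ 1 1 - γ 0 1 * γ 1 0) * Real.cos t = 0 := by linear_combination γ 1 1 * hre - γ 0 1 * him
  have h2 : (γ 0 0 * γ 1 1 - γ 0 1 * γ 1 0) * Real.sin t = 0 := by linear_combination γ 0 0 * him - γ 1 0 * hre
  have hc : Real.cos t = 0 := by
    rcases mul_eq_zero.1 h1 with h | h
    · exact absurd h hγ
    · exact h
  have hs : Real.sin t = 0 := by
    rcases mul_eq_zero.1 h2 with h | h
    · exact absurd h hγ
    · exact h
  have := Real.sin_sq_add_cos_sq t
  rw [hc, hs] at this; norm_num at this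

lemma abs_Zc (γ : Matrix (Fin 2) (Fin 2) ℝ) (t : ℝ) : ‖Zc γ t‖ = jmat γ t := by
  rw [Complex.norm_def, Complex.normSq_apply, Zc_re, Zc_im, jmat]
  ring_nf

lemma jmat_pos {γ : Matrix (Fin 2) (Fin 2) ℝ} (hγ : γ.det ≠ 0) (t : ℝ) : 0 < jmat γ t := by
  rw [← abs_Zc]
  exact norm_pos_iff.2 (Zc_ne_zero hγ t)

/-- `ψ` is "the" element `γ·θ`: it lies in `[0,π)` and
`(cos ψ, sin ψ) = ε ((a cos θ + b sin θ)/j(γ,θ), (c cos θ + d sin θ)/j(γ,θ))` for a sign `ε`. -/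
def IsAct (γ : Matrix (Fin 2) (Fin 2) ℝ) (θ ψ : ℝ) : Prop :=
  ψ ∈ Set.Ico 0 Real.pi ∧ ∃ ε : ℝ, (ε = 1 ∨ ε = -1) ∧
    Real.cos ψ = ε * ((γ 0 0 * Real.cos θ + γ 0 1 * Real.sin θ) / jmat γ θ) ∧
    Real.sin ψ = ε * ((γ 1 0 * Real.cos θ + γ 1 1 * Real.sin θ) / jmat γ θ)

open Classical in
/-- The point `γ·θ ∈ [0,π)`. -/
def mact (γ : Matrix (Fin 2) (Fin 2) ℝ) (θ : ℝ) : ℝ :=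
  if h : ∃ ψ, IsAct γ θ ψ then h.choose else 0

/-- two reals with equal cos and sin differ by a multiple of 2π -/
lemma sub_eq_two_pi_int {a b : ℝ} (hc : Real.cos a = Real.cos b) (hs : Real.sin a = Real.sin b) :
    ∃ k : ℤ, a - b = 2 * Real.pi * k :=
  Real.Angle.angle_eq_iff_two_pi_dvd_sub.1 (Real.Angle.cos_sin_inj hc hs)

lemma isAct_sub_arg {γ : Matrix (Fin 2) (Fin 2) ℝ} (hγ : γ.det ≠ 0) {t ψ : ℝ}
    (h : IsAct γ t ψ) : ∃ k : ℤ, ψ - Complex.arg (Zc γ t) = Real.pi * k := by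
  obtain ⟨-, ε, hε, hc, hs⟩ := h
  set α := Complex.arg (Zc γ t) with hα
  have hca : Real.cos α = (γ 0 0 * Real.cos t + γ 0 1 * Real.sin t) / jmat γ t := by
    rw [hα, Complex.cos_arg (Zc_ne_zero hγ t), abs_Zc, Zc_re]
  have hsa : Real.sin α = (γ 1 0 * Real.cos t + γ 1 1 * Real.sin t) / jmat γ t := by
    rw [hα, Complex.sin_arg, abs_Zc, Zc_im]
  rcases hε with rfl | rfl
  · obtain ⟨k, hk⟩ := sub_eq_two_pi_int (a := ψ) (b := α)
      (by rw [hc, hca]; ring) (by rw [hs, hsa]; ring)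
    exact ⟨2 * k, by push_cast; linarith⟩
  · obtain ⟨k, hk⟩ := sub_eq_two_pi_int (a := ψ) (b := α + Real.pi)
      (by rw [hc, Real.cos_add, Real.cos_pi, Real.sin_pi, hca]; ring)
      (by rw [hs, Real.sin_add, Real.cos_pi, Real.sin_pi, hsa]; ring)
    exact ⟨2 * k + 1, by push_cast; linarith⟩

lemma exists_isAct {γ : Matrix (Fin 2) (Fin 2) ℝ} (hγ : γ.det ≠ 0) (t : ℝ) :
    ∃ ψ, IsAct γ t ψ := by
  set α := Complex.arg (Zc γ t) with hα
  have hca : Real.cos α = (γ 0 0 * Real.cos t + γ 0 1 * Real.sin t) / jmat γ t := by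
    rw [hα, Complex.cos_arg (Zc_ne_zero hγ t), abs_Zc, Zc_re]
  have hsa : Real.sin α = (γ 1 0 * Real.cos t + γ 1 1 * Real.sin t) / jmat γ t := by
    rw [hα, Complex.sin_arg, abs_Zc, Zc_im]
  refine ⟨toIcoMod Real.pi_pos 0 α, ?_, ?_⟩
  · have := toIcoMod_mem_Ico Real.pi_pos 0 α
    simpa using this
  · set k := toIcoDiv Real.pi_pos 0 α with hk
    have hψ : toIcoMod Real.pi_pos 0 α = α - k * Real.pi := by
      rw [toIcoMod, hk, zsmul_eq_mul]
    rcases Int.even_or_odd k with ⟨m, hm⟩ | ⟨m, hm⟩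
    · refine ⟨1, Or.inl rfl, ?_, ?_⟩
      · rw [hψ, hm, ← hca]
        push_cast
        rw [show α - (↑m + ↑m) * Real.pi = α - ↑m * (2 * Real.pi) by ring,
          Real.cos_sub_int_mul_two_pi]
        ring
      · rw [hψ, hm, ← hsa]
        push_cast
        rw [show α - (↑m + ↑m) * Real.pi = α - ↑m * (2 * Real.pi) by ring,
          Real.sin_sub_int_mul_two_pi]
        ring
    · refine ⟨-1, Or.inr rfl, ?_, ?_⟩
      · rw [hψ, hm, ← hca]
        push_cast
        rw [show α - (2 * ↑m + 1) * Real.pi = α - Real.pi - ↑m * (2 * Real.pi) by ring,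
          Real.cos_sub_int_mul_two_pi, Real.cos_sub, Real.cos_pi, Real.sin_pi]
        ring
      · rw [hψ, hm, ← hsa]
        push_cast
        rw [show α - (2 * ↑m + 1) * Real.pi = α - Real.pi - ↑m * (2 * Real.pi) by ring,
          Real.sin_sub_int_mul_two_pi, Real.sin_sub, Real.cos_pi, Real.sin_pi]
        ring

lemma mact_sub_arg {γ : Matrix (Fin 2) (Fin 2) ℝ} (hγ : γ.det ≠ 0) (t : ℝ) :
    ∃ k : ℤ, mact γ t - Complex.arg (Zc γ t) = Real.pi * k := by
  have h := exists_isAct hγ t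
  have : mact γ t = h.choose := by rw [mact, dif_pos h]
  rw [this]
  exact isAct_sub_arg hγ h.choose_spec

/-- periodic function at points differing by integer multiple of the period -/
lemma periodic_eq_of_sub {g : ℝ → ℂ} (hg : Function.Periodic g Real.pi) {a b : ℝ}
    (h : ∃ k : ℤ, a - b = Real.pi * k) : g a = g b := by
  obtain ⟨k, hk⟩ := h
  have : a = b + k * Real.pi := by linarith
  rw [this]
  simpa using (hg.sub_int_mul_eq (x := b + k * Real.pi) k).symm

lemma periodic_deriv {g : ℝ → ℂ} (hg : Function.Periodic g Real.pi) :
    Function.Periodic (deriv g) Real.pi := by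
  intro x
  have : (fun y => g (y + Real.pi)) = g := funext fun y => hg y
  calc deriv g (x + Real.pi) = deriv (fun y => g (y + Real.pi)) x := by
        rw [deriv_comp_add_const]
    _ = deriv g x := by rw [this]

/-- Chain rule for the action: `d/dθ f(γ·θ) = det γ · j(γ,θ)⁻² · f′(γ·θ)`. -/
theorem hasDerivAt_mact_comp (γ : Matrix (Fin 2) (Fin 2) ℝ) (hγ : 0 < γ.det)
    (f : ℝ → ℂ) (hf : ContDiff ℝ 1 f) (hper : Function.Periodic f Real.pi) (θ : ℝ) :
    HasDerivAt (fun t => f (mact γ t))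
      (((γ.det / (jmat γ θ) ^ 2 : ℝ) : ℂ) * deriv f (mact γ θ)) θ := by
  have hγ' : γ.det ≠ 0 := ne_of_gt hγ
  have hD : Differentiable ℝ f := hf.differentiable one_ne_zero
  set w : ℂ := (starRingEnd ℂ) (Zc γ θ) with hw
  have hwne : w ≠ 0 := by
    simp [hw, Zc_ne_zero hγ' θ]
  set j := jmat γ θ with hj
  have hjpos : 0 < j := jmat_pos hγ' θ
  have hwz : w * Zc γ θ = ((j ^ 2 : ℝ) : ℂ) := by
    rw [hw, Complex.conj_mul']
    norm_cast
    rw [abs_Zc, hj]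
  set φ : ℝ → ℝ := fun t => (Complex.log (w * Zc γ t)).im - Complex.arg w with hφdef
  -- φ t ≡ arg (Zc γ t) mod 2π
  have hφarg : ∀ t, ∃ k : ℤ, φ t - Complex.arg (Zc γ t) = Real.pi * k := by
    intro t
    have h1 : (Complex.arg (w * Zc γ t) : Real.Angle) =
        ((Complex.arg w + Complex.arg (Zc γ t) : ℝ) : Real.Angle) := by
      rw [Complex.arg_mul_coe_angle hwne (Zc_ne_zero hγ' t)]
      push_cast [Real.Angle.coe_add]
      rfl
    obtain ⟨k, hk⟩ := Real.Angle.angle_eq_iff_two_pi_dvd_sub.1 h1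
    refine ⟨2 * k, ?_⟩
    have : φ t = Complex.arg (w * Zc γ t) - Complex.arg w := by
      rw [hφdef]; simp [Complex.log_im]
    rw [this]
    push_cast
    linarith
  -- the two functions agree
  have hfeq : (fun t => f (mact γ t)) = fun t => f (φ t) := by
    funext t
    apply periodic_eq_of_sub hper
    obtain ⟨k, hk⟩ := mact_sub_arg hγ' t
    obtain ⟨k', hk'⟩ := hφarg t
    exact ⟨k - k', by push_cast; linarith⟩
  -- derivative of Zc
  set X' : ℝ := -γ 0 0 * Real.sin θ + γ 0 1 * Real.cos θ with hX'
  set Y' : ℝ := -γ 1 0 * Real.sin θ + γ 1 1 * Real.cos θ with hY'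
  have hXd : HasDerivAt (fun t => γ 0 0 * Real.cos t + γ 0 1 * Real.sin t) X' θ := by
    simpa [hX', mul_comm, Pi.add_def] using
      (((Real.hasDerivAt_cos θ).const_mul (γ 0 0)).add
        ((Real.hasDerivAt_sin θ).const_mul (γ 0 1)))
  have hYd : HasDerivAt (fun t => γ 1 0 * Real.cos t + γ 1 1 * Real.sin t) Y' θ := by
    simpa [hY', mul_comm, Pi.add_def] using
      (((Real.hasDerivAt_cos θ).const_mul (γ 1 0)).add
        ((Real.hasDerivAt_sin θ).const_mul (γ 1 1)))
  have hZd : HasDerivAt (fun t => Zc γ t) ((X' : ℂ) + (Y' : ℂ) * Complex.I) θ := by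
    exact (hXd.ofReal_comp).add ((hYd.ofReal_comp).mul_const Complex.I)
  have hWZd : HasDerivAt (fun t => w * Zc γ t) (w * ((X' : ℂ) + (Y' : ℂ) * Complex.I)) θ :=
    hZd.const_mul w
  have hslit : w * Zc γ θ ∈ Complex.slitPlane := by
    rw [hwz]
    exact Complex.mem_slitPlane_iff.2 (Or.inl (by rw [Complex.ofReal_re]; positivity))
  have hlog : HasDerivAt (fun t => Complex.log (w * Zc γ t))
      ((w * Zc γ θ)⁻¹ * (w * ((X' : ℂ) + (Y' : ℂ) * Complex.I))) θ :=
    by have := (Complex.hasDerivAt_log hslit).comp θ hWZd; exact this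
  have him : HasDerivAt (fun t => (Complex.log (w * Zc γ t)).im)
      (((w * Zc γ θ)⁻¹ * (w * ((X' : ℂ) + (Y' : ℂ) * Complex.I))).im) θ :=
    Complex.imCLM.hasFDerivAt.comp_hasDerivAt θ hlog
  -- compute the derivative value
  have hval : ((w * Zc γ θ)⁻¹ * (w * ((X' : ℂ) + (Y' : ℂ) * Complex.I))).im
      = γ.det / j ^ 2 := by
    rw [hwz, hw]
    have : ((Zc γ θ).re * Y' - (Zc γ θ).im * X') = γ.det := by
      rw [Zc_re, Zc_im, hX', hY', Matrix.det_fin_two]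
      linear_combination (γ 0 0 * γ 1 1 - γ 0 1 * γ 1 0) * (Real.sin_sq_add_cos_sq θ)
    rw [← Complex.ofReal_inv]
    rw [show (((j ^ 2)⁻¹ : ℝ) : ℂ) * ((starRingEnd ℂ) (Zc γ θ) * ((X' : ℂ) + (Y' : ℂ) * Complex.I)) = ((j ^ 2)⁻¹ : ℝ) • ((starRingEnd ℂ) (Zc γ θ) * ((X' : ℂ) + (Y' : ℂ) * Complex.I)) from Complex.real_smul.symm, Complex.smul_im]
    rw [show ((starRingEnd ℂ) (Zc γ θ) * ((X' : ℂ) + (Y' : ℂ) * Complex.I)).im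
        = (Zc γ θ).re * Y' - (Zc γ θ).im * X' by
      simp [Complex.mul_im, Complex.conj_re, Complex.conj_im]; ring]
    rw [this]
    field_simp
    rw [smul_eq_mul, ← mul_assoc, mul_one_div_cancel (pow_pos hjpos 2).ne', one_mul]
  have hφd : HasDerivAt φ (γ.det / j ^ 2) θ := by
    rw [← hval]
    exact him.sub_const _
  -- compose with f
  have hcomp : HasDerivAt (fun t => f (φ t))
      ((γ.det / j ^ 2) • deriv f (φ θ)) θ :=
    HasDerivAt.scomp (g₁ := f) (h := φ) θ ((hD (φ θ)).hasDerivAt) hφd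
  rw [hfeq]
  have hderiv_eq : deriv f (φ θ) = deriv f (mact γ θ) := by
    apply periodic_eq_of_sub (periodic_deriv hper)
    obtain ⟨k, hk⟩ := hφarg θ
    obtain ⟨k', hk'⟩ := mact_sub_arg hγ' θ
    exact ⟨k - k', by push_cast; linarith⟩
  rw [← hderiv_eq]
  simpa [Complex.real_smul] using hcomp

end
end

section
/- Let γ be a 2×2 matrix with rational entries and positive determinant, let θ₀ ∈ Ξ and ℓ ∈ ℕ₀. Then the ℓ-th derivative of the smooth function θ ↦ j(γ,θ) evaluated at θ₀ lies in the field F₀. -/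
noncomputable section

/-- `Ξ = {θ : sin θ = 0, or sin θ ≠ 0 and cot θ ∈ ℚ}`. -/
def Xi : Set ℝ :=
  {θ | Real.sin θ = 0 ∨ (Real.sin θ ≠ 0 ∧ ∃ q : ℚ, Real.cos θ / Real.sin θ = (q : ℝ))}

/-- `F₀`: the subfield of `ℝ` generated by the square roots `√n`, `n ∈ ℕ`. -/
def F0 : Subfield ℝ := Subfield.closure {x : ℝ | ∃ n : ℕ, x = Real.sqrt n}

/-- Auxiliary trigonometric quadratic form. -/
def gf (A B C : ℚ) (θ : ℝ) : ℝ :=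
  (A : ℝ) * Real.cos θ ^ 2 + (B : ℝ) * (Real.cos θ * Real.sin θ) + (C : ℝ) * Real.sin θ ^ 2

lemma hasDerivAt_gf (A B C : ℚ) (θ : ℝ) :
    HasDerivAt (gf A B C) (gf B (2 * (C - A)) (-B) θ) θ := by
  have hc := Real.hasDerivAt_cos θ
  have hs := Real.hasDerivAt_sin θ
  have h1 : HasDerivAt (fun t => (A : ℝ) * Real.cos t ^ 2)
      ((A : ℝ) * ((2 : ℕ) * Real.cos θ ^ (2 - 1) * (-Real.sin θ))) θ := (hc.pow 2).const_mul _
  have h2 : HasDerivAt (fun t => (B : ℝ) * (Real.cos t * Real.sin t))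
      ((B : ℝ) * ((-Real.sin θ) * Real.sin θ + Real.cos θ * Real.cos θ)) θ :=
    (hc.mul hs).const_mul _
  have h3 : HasDerivAt (fun t => (C : ℝ) * Real.sin t ^ 2)
      ((C : ℝ) * ((2 : ℕ) * Real.sin θ ^ (2 - 1) * Real.cos θ)) θ := (hs.pow 2).const_mul _
  have := (h1.add h2).add h3
  refine HasDerivAt.congr_deriv (f := gf A B C) this ?_
  unfold gf
  push_cast
  ring

lemma diff_gf (A B C : ℚ) : Differentiable ℝ (gf A B C) :=
  fun θ => (hasDerivAt_gf A B C θ).differentiableAt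

/-- Functions generated by rationals, cos, sin and `(gf A B C)⁻¹`. -/
inductive Nice (A B C : ℚ) : (ℝ → ℝ) → Prop
  | const (q : ℚ) : Nice A B C fun _ => (q : ℝ)
  | cos : Nice A B C Real.cos
  | sin : Nice A B C Real.sin
  | ginv : Nice A B C fun θ => (gf A B C θ)⁻¹
  | add {f h : ℝ → ℝ} : Nice A B C f → Nice A B C h → Nice A B C fun θ => f θ + h θ
  | mul {f h : ℝ → ℝ} : Nice A B C f → Nice A B C h → Nice A B C fun θ => f θ * h θ

lemma nice_gf (A B C A' B' C' : ℚ) : Nice A B C (gf A' B' C') := by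
  have h : gf A' B' C' = fun θ =>
      (A' : ℝ) * (Real.cos θ * Real.cos θ) +
        ((B' : ℝ) * (Real.cos θ * Real.sin θ) + (C' : ℝ) * (Real.sin θ * Real.sin θ)) := by
    funext θ; unfold gf; ring
  rw [h]
  exact Nice.add (Nice.mul (Nice.const A') (Nice.mul Nice.cos Nice.cos))
    (Nice.add (Nice.mul (Nice.const B') (Nice.mul Nice.cos Nice.sin))
      (Nice.mul (Nice.const C') (Nice.mul Nice.sin Nice.sin)))

lemma nice_diff {A B C : ℚ} (hg : ∀ θ, 0 < gf A B C θ) {h : ℝ → ℝ}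
    (hn : Nice A B C h) : Differentiable ℝ h := by
  induction hn with
  | const q => exact differentiable_const _
  | cos => exact Real.differentiable_cos
  | sin => exact Real.differentiable_sin
  | ginv => exact (diff_gf A B C).inv fun θ => (hg θ).ne'
  | add hf hh ihf ihh => exact ihf.add ihh
  | mul hf hh ihf ihh => exact ihf.mul ihh

lemma nice_deriv {A B C : ℚ} (hg : ∀ θ, 0 < gf A B C θ) {h : ℝ → ℝ}
    (hn : Nice A B C h) : Nice A B C (deriv h) := by
  induction hn with
  | const q =>
      have : deriv (fun _ : ℝ => (q : ℝ)) = fun _ : ℝ => ((0 : ℚ) : ℝ) := by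
        funext θ; simp
      rw [this]; exact Nice.const 0
  | cos =>
      have : deriv Real.cos = fun θ => ((-1 : ℚ) : ℝ) * Real.sin θ := by
        funext θ; simp
      rw [this]; exact Nice.mul (Nice.const (-1)) Nice.sin
  | sin =>
      have : deriv Real.sin = Real.cos := by funext θ; simp
      rw [this]; exact Nice.cos
  | ginv =>
      have : deriv (fun θ => (gf A B C θ)⁻¹) =
          fun θ => ((-1 : ℚ) : ℝ) * (gf B (2 * (C - A)) (-B) θ *
            ((gf A B C θ)⁻¹ * (gf A B C θ)⁻¹)) := by
        funext θ
        have hd := ((hasDerivAt_gf A B C θ).inv (hg θ).ne').deriv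
        rw [show (fun θ => (gf A B C θ)⁻¹) = (gf A B C)⁻¹ from rfl, hd]
        push_cast
        field_simp
      rw [this]
      exact Nice.mul (Nice.const (-1)) (Nice.mul (nice_gf _ _ _ _ _ _)
        (Nice.mul Nice.ginv Nice.ginv))
  | add hf hh ihf ihh =>
      rename_i f h'
      have : deriv (fun θ => f θ + h' θ) = fun θ => deriv f θ + deriv h' θ := by
        funext θ
        exact deriv_add (nice_diff hg hf θ) (nice_diff hg hh θ)
      rw [this]; exact Nice.add ihf ihh
  | mul hf hh ihf ihh =>
      rename_i f h'
      have : deriv (fun θ => f θ * h' θ) =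
          fun θ => deriv f θ * h' θ + f θ * deriv h' θ := by
        funext θ
        exact deriv_mul (nice_diff hg hf θ) (nice_diff hg hh θ)
      rw [this]; exact Nice.add (Nice.mul ihf hh) (Nice.mul hf ihh)


lemma sqrt_ratCast_mem (q : ℚ) : Real.sqrt (q : ℝ) ∈ F0 := by
  rcases le_or_gt (q : ℝ) 0 with h | h
  · rw [Real.sqrt_eq_zero'.mpr h]
    exact zero_mem F0
  · have hq : 0 < q := by exact_mod_cast h
    have hnum : ((q.num.toNat : ℕ) : ℝ) = (q.num : ℝ) := by
      exact_mod_cast congrArg (Int.cast : ℤ → ℝ) (Int.toNat_of_nonneg (Rat.num_nonneg.mpr hq.le))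
    have hcast : (q : ℝ) = ((q.num.toNat : ℕ) : ℝ) / ((q.den : ℕ) : ℝ) := by
      rw [hnum, Rat.cast_def]
    rw [hcast, Real.sqrt_div (by positivity) _]
    exact div_mem (Subfield.subset_closure ⟨q.num.toNat, rfl⟩)
      (Subfield.subset_closure ⟨q.den, rfl⟩)

lemma gf_pos (a b c d : ℚ) (hdet : a * d - b * c ≠ 0) (θ : ℝ) :
    0 < gf (a ^ 2 + c ^ 2) (2 * (a * b + c * d)) (b ^ 2 + d ^ 2) θ := by
  set x := Real.cos θ
  set y := Real.sin θ
  have hxy : y ^ 2 + x ^ 2 = 1 := Real.sin_sq_add_cos_sq θ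
  have hD : ((a : ℝ) * d - b * c) ≠ 0 := by exact_mod_cast hdet
  have hD2 : 0 < ((a : ℝ) * d - b * c) ^ 2 := by positivity
  have hval : gf (a ^ 2 + c ^ 2) (2 * (a * b + c * d)) (b ^ 2 + d ^ 2) θ =
      ((a : ℝ) * x + b * y) ^ 2 + ((c : ℝ) * x + d * y) ^ 2 := by
    unfold gf; push_cast; ring
  rw [hval]
  by_contra hle
  push_neg at hle
  have hu : (a : ℝ) * x + b * y = 0 := by nlinarith [sq_nonneg ((a:ℝ)*x + b*y), sq_nonneg ((c:ℝ)*x + d*y)]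
  have hv : (c : ℝ) * x + d * y = 0 := by nlinarith [sq_nonneg ((a:ℝ)*x + b*y), sq_nonneg ((c:ℝ)*x + d*y)]
  have : ((a : ℝ) * d - b * c) ^ 2 = 0 := by
    have key : ((a : ℝ) * d - b * c) ^ 2 * (x ^ 2 + y ^ 2) =
        (((a:ℝ)*x + b*y) * d - ((c:ℝ)*x + d*y) * b) ^ 2 +
        (((c:ℝ)*x + d*y) * a - ((a:ℝ)*x + b*y) * c) ^ 2 := by ring
    rw [hu, hv] at key
    nlinarith [key, hxy]
  exact hD2.ne' this

lemma xi_facts (A B C : ℚ) {θ₀ : ℝ} (hθ : θ₀ ∈ Xi) :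
    Real.cos θ₀ ∈ F0 ∧ Real.sin θ₀ ∈ F0 ∧ ∃ r : ℚ, gf A B C θ₀ = (r : ℝ) := by
  have hpyt : Real.sin θ₀ ^ 2 + Real.cos θ₀ ^ 2 = 1 := Real.sin_sq_add_cos_sq θ₀
  rcases hθ with hs0 | ⟨hsne, q, hq⟩
  · have hc2 : Real.cos θ₀ ^ 2 = 1 := by rw [hs0] at hpyt; linarith [hpyt]
    have hcF : Real.cos θ₀ ∈ F0 := by
      have : (Real.cos θ₀ - 1) * (Real.cos θ₀ + 1) = 0 := by linear_combination hc2
      rcases mul_eq_zero.mp this with h | h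
      · rw [sub_eq_zero.mp h]; exact one_mem F0
      · rw [eq_neg_of_add_eq_zero_left h]; exact neg_mem (one_mem F0)
    refine ⟨hcF, by rw [hs0]; exact zero_mem F0, A, ?_⟩
    unfold gf; rw [hs0, hc2]; ring
  · have hcos : Real.cos θ₀ = (q : ℝ) * Real.sin θ₀ := by
      field_simp at hq; linarith [hq]
    have h1 : (0 : ℝ) < (q : ℝ) ^ 2 + 1 := by positivity
    have hmul : Real.sin θ₀ ^ 2 * ((q : ℝ) ^ 2 + 1) = 1 := by
      rw [hcos] at hpyt; linear_combination hpyt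
    have hs2 : Real.sin θ₀ ^ 2 = (((1 + q ^ 2)⁻¹ : ℚ) : ℝ) := by
      push_cast
      field_simp
      linear_combination hmul
    have hsqF : Real.sqrt (Real.sin θ₀ ^ 2) ∈ F0 := by
      rw [hs2]; exact sqrt_ratCast_mem _
    have hsF : Real.sin θ₀ ∈ F0 := by
      rcases abs_cases (Real.sin θ₀) with ⟨h, _⟩ | ⟨h, _⟩
      · rw [← h, ← Real.sqrt_sq_eq_abs] at *; exact hsqF
      · have : Real.sin θ₀ = -Real.sqrt (Real.sin θ₀ ^ 2) := by
          rw [Real.sqrt_sq_eq_abs, h]; ring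
        rw [this]; exact neg_mem hsqF
    have hcF : Real.cos θ₀ ∈ F0 := by
      rw [hcos]; exact mul_mem (SubfieldClass.ratCast_mem F0 q) hsF
    refine ⟨hcF, hsF, (A * q ^ 2 + B * q + C) * (1 + q ^ 2)⁻¹, ?_⟩
    unfold gf
    rw [hcos]
    push_cast
    field_simp
    linear_combination ((A:ℝ) * (q:ℝ) ^ 2 + (B:ℝ) * (q:ℝ) + (C:ℝ)) * hmul


lemma nice_mem {A B C : ℚ} {θ₀ : ℝ} (hc : Real.cos θ₀ ∈ F0) (hs : Real.sin θ₀ ∈ F0)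
    (hgi : (gf A B C θ₀)⁻¹ ∈ F0) {h : ℝ → ℝ} (hn : Nice A B C h) : h θ₀ ∈ F0 := by
  induction hn with
  | const q => exact SubfieldClass.ratCast_mem F0 q
  | cos => exact hc
  | sin => exact hs
  | ginv => exact hgi
  | add hf hh ihf ihh => exact add_mem ihf ihh
  | mul hf hh ihf ihh => exact mul_mem ihf ihh


lemma key_sqrt_gf_mem (A B C : ℚ) (hg : ∀ θ, 0 < gf A B C θ) (θ₀ : ℝ) (hθ : θ₀ ∈ Xi)
    (ℓ : ℕ) : iteratedDeriv ℓ (fun θ => Real.sqrt (gf A B C θ)) θ₀ ∈ F0 := by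
  have claim : ∀ n : ℕ, ∃ h : ℝ → ℝ, Nice A B C h ∧
      iteratedDeriv n (fun θ => Real.sqrt (gf A B C θ)) =
        fun θ => h θ * Real.sqrt (gf A B C θ) := by
    intro n
    induction n with
    | zero =>
        exact ⟨fun _ => ((1 : ℚ) : ℝ), Nice.const 1, by
          rw [iteratedDeriv_zero]; funext θ; simp⟩
    | succ n ih =>
        obtain ⟨h, hn, heq⟩ := ih
        have key : ∀ θ, HasDerivAt (fun t => h t * Real.sqrt (gf A B C t))
            ((deriv h θ + h θ * (gf B (2 * (C - A)) (-B) θ *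
              (((1/2 : ℚ) : ℝ) * (gf A B C θ)⁻¹))) * Real.sqrt (gf A B C θ)) θ := by
          intro θ
          have hgθ := hg θ
          have hd1 : HasDerivAt h (deriv h θ) θ := (nice_diff hg hn θ).hasDerivAt
          have hd2 : HasDerivAt (fun t => Real.sqrt (gf A B C t))
              (gf B (2 * (C - A)) (-B) θ / (2 * Real.sqrt (gf A B C θ))) θ :=
            (hasDerivAt_gf A B C θ).sqrt hgθ.ne'
          have hmul := hd1.mul hd2
          refine HasDerivAt.congr_deriv (f := fun t => h t * Real.sqrt (gf A B C t)) hmul ?_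
          symm
          have hsne : Real.sqrt (gf A B C θ) ≠ 0 := (Real.sqrt_pos.mpr hgθ).ne'
          have hms : Real.sqrt (gf A B C θ) * Real.sqrt (gf A B C θ) = gf A B C θ :=
            Real.mul_self_sqrt hgθ.le
          have h2 : (gf A B C θ)⁻¹ =
              (Real.sqrt (gf A B C θ))⁻¹ * (Real.sqrt (gf A B C θ))⁻¹ := by
            rw [← mul_inv, hms]
          rw [h2]
          push_cast
          field_simp
        refine ⟨fun θ => deriv h θ + h θ * (gf B (2 * (C - A)) (-B) θ *
            (((1/2 : ℚ) : ℝ) * (gf A B C θ)⁻¹)), ?_, ?_⟩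
        · exact Nice.add (nice_deriv hg hn) (Nice.mul hn (Nice.mul (nice_gf _ _ _ _ _ _)
            (Nice.mul (Nice.const (1/2)) Nice.ginv)))
        · rw [iteratedDeriv_succ, heq]
          funext θ
          exact (key θ).deriv
  obtain ⟨hcF, hsF, r, hr⟩ := xi_facts A B C hθ
  obtain ⟨h, hn, heq⟩ := claim ℓ
  rw [heq]
  refine mul_mem (nice_mem hcF hsF ?_ hn) ?_
  · rw [hr]; exact inv_mem (SubfieldClass.ratCast_mem F0 r)
  · rw [hr]; exact sqrt_ratCast_mem r

/-- For `γ ∈ GL₂⁺(ℚ)` and `θ₀ ∈ Ξ`, all derivatives of `θ ↦ j(γ,θ)` at `θ₀` lie in `F₀`. -/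
theorem iteratedDeriv_jmat_mem_F0 (γ : Matrix (Fin 2) (Fin 2) ℚ) (hγ : 0 < γ.det)
    (θ₀ : ℝ) (hθ : θ₀ ∈ Xi) (ℓ : ℕ) :
    iteratedDeriv ℓ (jmat (γ.map (fun q => (q : ℝ)))) θ₀ ∈ F0 := by
  have hdet : γ 0 0 * γ 1 1 - γ 0 1 * γ 1 0 ≠ 0 := by
    rw [Matrix.det_fin_two] at hγ
    exact ne_of_gt (by linarith [hγ])
  have hg : ∀ θ, 0 < gf (γ 0 0 ^ 2 + γ 1 0 ^ 2) (2 * (γ 0 0 * γ 0 1 + γ 1 0 * γ 1 1))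
      (γ 0 1 ^ 2 + γ 1 1 ^ 2) θ :=
    fun θ => gf_pos (γ 0 0) (γ 0 1) (γ 1 0) (γ 1 1) hdet θ
  have hjm : jmat (γ.map fun q => (q : ℝ)) = fun θ =>
      Real.sqrt (gf (γ 0 0 ^ 2 + γ 1 0 ^ 2) (2 * (γ 0 0 * γ 0 1 + γ 1 0 * γ 1 1))
        (γ 0 1 ^ 2 + γ 1 1 ^ 2) θ) := by
    funext θ
    unfold jmat gf
    simp only [Matrix.map_apply]
    congr 1
    push_cast
    ring
  rw [hjm]
  exact key_sqrt_gf_mem _ _ _ hg θ₀ hθ ℓ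

end
end

section
/- Let s ∈ ℕ₀ and let w₀, …, w_s : ℝ → ℂ be continuous π-periodic functions such that Σ_{j=0}^{s} w_j(θ)·(∂^j φ)(θ) = 0 for every θ ∈ ℝ and every C^∞ π-periodic function φ : ℝ → ℂ. Then w_j = 0 for all j = 0, …, s. -/
noncomputable section

/-- The operator `∂ = 1 + d/dθ`. -/
def pd (f : ℝ → ℂ) : ℝ → ℂ := fun θ => f θ + deriv f θ

lemma pd_exp (a : ℂ) (c : ℂ) :
    pd (fun θ : ℝ => c * Complex.exp (a * θ)) = fun θ : ℝ => (1 + a) * c * Complex.exp (a * θ) := by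
  funext θ
  have hd : deriv (fun θ : ℝ => c * Complex.exp (a * θ)) θ = c * (Complex.exp (a * θ) * a) := by
    have h1 : HasDerivAt (fun θ : ℝ => (a * θ : ℂ)) a θ := by
      simpa using ((hasDerivAt_id θ).ofReal_comp.const_mul a)
    exact ((h1.cexp).const_mul c).deriv
  simp only [pd, hd]
  ring

lemma pd_iter_exp (a : ℂ) (j : ℕ) :
    pd^[j] (fun θ : ℝ => Complex.exp (a * θ)) = fun θ : ℝ => (1 + a) ^ j * Complex.exp (a * θ) := by
  induction j with
  | zero => simp
  | succ n ih =>
    rw [Function.iterate_succ_apply', ih]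
    have := pd_exp a ((1 + a) ^ n)
    rw [this]
    funext θ; ring

/-- If `Σ_j w_j(θ)·(∂^j φ)(θ) = 0` for all smooth π-periodic `φ`, then all `w_j = 0`. -/
theorem coefficients_vanish (s : ℕ) (w : Fin (s + 1) → ℝ → ℂ)
    (hcont : ∀ j, Continuous (w j)) (hper : ∀ j, Function.Periodic (w j) Real.pi)
    (h : ∀ φ : ℝ → ℂ, ContDiff ℝ (⊤ : ℕ∞) φ → Function.Periodic φ Real.pi →
      ∀ θ : ℝ, ∑ j : Fin (s + 1), w j θ * (pd^[(j : ℕ)] φ) θ = 0) :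
    ∀ j, w j = 0 := by
  -- test functions φ_k(θ) = exp(2k i θ)
  have key : ∀ (k : ℕ) (θ : ℝ),
      ∑ j : Fin (s + 1), w j θ * (1 + 2 * k * Complex.I) ^ (j : ℕ) = 0 := by
    intro k θ
    set a : ℂ := 2 * k * Complex.I with ha
    have hsmooth : ContDiff ℝ (⊤ : ℕ∞) (fun θ : ℝ => Complex.exp (a * θ)) := by
      apply Complex.contDiff_exp.comp
      exact (contDiff_const.mul (Complex.ofRealCLM.contDiff))
    have hperφ : Function.Periodic (fun θ : ℝ => Complex.exp (a * θ)) Real.pi := by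
      intro x
      simp only [ha]
      push_cast
      rw [mul_add, Complex.exp_add]
      have : Complex.exp (2 * (k : ℂ) * Complex.I * (Real.pi : ℂ)) = 1 := by
        have : 2 * (k : ℂ) * Complex.I * (Real.pi : ℂ) = (k : ℤ) * (2 * Real.pi * Complex.I) := by
          push_cast; ring
        rw [this, Complex.exp_int_mul_two_pi_mul_I]
      rw [this, mul_one]
    have := h _ hsmooth hperφ θ
    simp only [pd_iter_exp a] at this
    have hexp : Complex.exp (a * θ) ≠ 0 := Complex.exp_ne_zero _
    have : (∑ j : Fin (s + 1), w j θ * (1 + a) ^ (j : ℕ)) * Complex.exp (a * θ) = 0 := by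
      rw [Finset.sum_mul]
      convert this using 2 with j
      ring
    rcases mul_eq_zero.mp this with h' | h'
    · exact h'
    · exact absurd h' hexp
  intro j
  funext θ
  -- polynomial argument
  set p : Polynomial ℂ := ∑ i : Fin (s + 1), Polynomial.C (w i θ) * Polynomial.X ^ (i : ℕ) with hp
  have hdeg : p.natDegree < s + 1 := by
    have : p.natDegree ≤ s := by
      apply Polynomial.natDegree_sum_le_of_forall_le
      intro i _
      apply le_trans (Polynomial.natDegree_C_mul_le _ _)
      simpa using Nat.lt_succ_iff.mp i.isLt
    omega
  have heval : ∀ k : Fin (s + 1), p.eval (1 + 2 * (k : ℕ) * Complex.I) = 0 := by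
    intro k
    rw [hp]
    simp only [Polynomial.eval_finset_sum, Polynomial.eval_mul, Polynomial.eval_C,
      Polynomial.eval_pow, Polynomial.eval_X]
    exact key k θ
  have hinj : Function.Injective (fun k : Fin (s + 1) => 1 + 2 * (k : ℕ) * Complex.I) := by
    intro k₁ k₂ hk
    simp only [add_right_inj] at hk
    have := mul_right_cancel₀ Complex.I_ne_zero hk
    have : ((k₁ : ℕ) : ℂ) = ((k₂ : ℕ) : ℂ) := by
      field_simp at this
      exact_mod_cast this
    exact Fin.ext (by exact_mod_cast this)
  have hp0 : p = 0 :=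
    Polynomial.eq_zero_of_natDegree_lt_card_of_eval_eq_zero p hinj heval
      (by simpa using hdeg)
  have hcoeff : p.coeff (j : ℕ) = w j θ := by
    rw [hp]
    rw [Polynomial.finset_sum_coeff]
    rw [Finset.sum_eq_single j]
    · simp
    · intro i _ hij
      simp only [Polynomial.coeff_C_mul, Polynomial.coeff_X_pow]
      rw [if_neg (fun hc => hij (Fin.ext (by omega))), mul_zero]
    · exact fun hj => absurd (Finset.mem_univ j) hj
  rw [hp0] at hcoeff
  simpa using hcoeff.symm

end
end

section
/- Fix λ ∈ ℂ, γ ∈ GL₂⁺(ℝ) and s ∈ ℕ₀, and let u₀, …, u_s : ℝ → ℂ be continuous π-periodic functions satisfying ∂^s(φ|_λ γ)(θ) = (det γ)^{1+λ/2} · Σ_{j=0}^{s} u_j(θ)·(∂^j φ)(γ·θ) for all C^∞ π-periodic φ and all θ. Then the top function is given by u_s(θ) = (det γ)^s · j(γ,θ)^{−1−λ−2s} for all θ ∈ ℝ. -/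
noncomputable section

/-- The weight-`λ` slash action: `(φ|_λ γ)(θ) = (det γ)^{1+λ/2} j(γ,θ)^{-1-λ} φ(γ·θ)`. -/
def slash (lam : ℂ) (γ : Matrix (Fin 2) (Fin 2) ℝ) (φ : ℝ → ℂ) : ℝ → ℂ :=
  fun θ => (γ.det : ℂ) ^ (1 + lam / 2) * ((jmat γ θ : ℝ) : ℂ) ^ (-1 - lam) * φ (mact γ θ)

/-- `u₀, …, u_s` are continuous π-periodic functions with
`∂^s(φ|_λ γ)(θ) = (det γ)^{1+λ/2} Σ_j u_j(θ)·(∂^j φ)(γ·θ)` for all smooth π-periodic `φ`. -/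
def GoodTuple (lam : ℂ) (γ : Matrix (Fin 2) (Fin 2) ℝ) (s : ℕ) (u : Fin (s + 1) → ℝ → ℂ) : Prop :=
  (∀ j, Continuous (u j) ∧ Function.Periodic (u j) Real.pi) ∧
  ∀ φ : ℝ → ℂ, ContDiff ℝ (⊤ : ℕ∞) φ → Function.Periodic φ Real.pi → ∀ θ : ℝ,
    pd^[s] (slash lam γ φ) θ =
      (γ.det : ℂ) ^ (1 + lam / 2) * ∑ j : Fin (s + 1), u j θ * (pd^[(j : ℕ)] φ) (mact γ θ)

open Complex Real

namespace GTaux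

variable (γ : Matrix (Fin 2) (Fin 2) ℝ)

def Af (θ : ℝ) : ℝ := γ 0 0 * Real.cos θ + γ 0 1 * Real.sin θ
def Bf (θ : ℝ) : ℝ := γ 1 0 * Real.cos θ + γ 1 1 * Real.sin θ
def Ad (θ : ℝ) : ℝ := -(γ 0 0) * Real.sin θ + γ 0 1 * Real.cos θ
def Bd (θ : ℝ) : ℝ := -(γ 1 0) * Real.sin θ + γ 1 1 * Real.cos θ
def nf (θ : ℝ) : ℝ := Af γ θ ^ 2 + Bf γ θ ^ 2
def zf (θ : ℝ) : ℂ := (Af γ θ : ℂ) + (Bf γ θ : ℂ) * I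
def wf (θ : ℝ) : ℂ := zf γ θ ^ 2 / ((nf γ θ : ℝ) : ℂ)

variable {γ}

lemma det_eq : γ.det = γ 0 0 * γ 1 1 - γ 0 1 * γ 1 0 := Matrix.det_fin_two γ

lemma AB_det (θ : ℝ) : Af γ θ * Bd γ θ - Ad γ θ * Bf γ θ = γ.det := by
  have h := Real.sin_sq_add_cos_sq θ
  simp only [Af, Bf, Ad, Bd, det_eq]
  linear_combination (γ 0 0 * γ 1 1 - γ 0 1 * γ 1 0) * h

lemma nf_pos (hγ : 0 < γ.det) (θ : ℝ) : 0 < nf γ θ := by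
  rcases lt_or_ge 0 (nf γ θ) with h | h
  · exact h
  · exfalso
    have hn : Af γ θ ^ 2 + Bf γ θ ^ 2 ≤ 0 := by simpa [nf] using h
    have hA : Af γ θ = 0 := by nlinarith [sq_nonneg (Af γ θ), sq_nonneg (Bf γ θ)]
    have hB : Bf γ θ = 0 := by nlinarith [sq_nonneg (Af γ θ), sq_nonneg (Bf γ θ)]
    -- d*A - b*B = det * cos θ, -c*A + a*B = det * sin θ
    have h1 : γ 1 1 * Af γ θ - γ 0 1 * Bf γ θ = γ.det * Real.cos θ := by
      simp only [Af, Bf, det_eq]; ring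
    have h2 : -(γ 1 0) * Af γ θ + γ 0 0 * Bf γ θ = γ.det * Real.sin θ := by
      simp only [Af, Bf, det_eq]; ring
    rw [hA, hB] at h1 h2
    have hc : Real.cos θ = 0 := by
      have := h1; simp at this; rcases this with h|h
      · exact absurd h hγ.ne'
      · exact h
    have hs : Real.sin θ = 0 := by
      have := h2; simp at this; rcases this with h|h
      · exact absurd h hγ.ne'
      · exact h
    nlinarith [Real.sin_sq_add_cos_sq θ]

lemma jmat_eq (θ : ℝ) : jmat γ θ = Real.sqrt (nf γ θ) := rfl

lemma jmat_pos (hγ : 0 < γ.det) (θ : ℝ) : 0 < jmat γ θ := by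
  rw [jmat_eq]; exact Real.sqrt_pos.2 (nf_pos hγ θ)

lemma jmat_sq (hγ : 0 < γ.det) (θ : ℝ) : jmat γ θ ^ 2 = nf γ θ :=
  Real.sq_sqrt (nf_pos hγ θ).le

lemma zf_re (θ : ℝ) : (zf γ θ).re = Af γ θ := by simp [zf]
lemma zf_im (θ : ℝ) : (zf γ θ).im = Bf γ θ := by simp [zf]

lemma normSq_zf (θ : ℝ) : Complex.normSq (zf γ θ) = nf γ θ := by
  simp [zf, Complex.normSq_add_mul_I, nf]

lemma zf_ne (hγ : 0 < γ.det) (θ : ℝ) : zf γ θ ≠ 0 := by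
  intro h
  have := normSq_zf (γ := γ) θ
  rw [h] at this
  simp at this
  exact (nf_pos hγ θ).ne' this.symm

lemma abs_zf (hγ : 0 < γ.det) (θ : ℝ) : ‖zf γ θ‖ = jmat γ θ := by
  rw [Complex.norm_def, normSq_zf, jmat_eq]

lemma wf_ne (hγ : 0 < γ.det) (θ : ℝ) : wf γ θ ≠ 0 := by
  have h1 := zf_ne hγ θ
  have h2 : ((nf γ θ : ℝ) : ℂ) ≠ 0 := by
    exact_mod_cast (nf_pos hγ θ).ne'
  simp [wf, pow_eq_zero_iff, h1, h2]


lemma hasDerivAt_Af (θ : ℝ) : HasDerivAt (Af γ) (Ad γ θ) θ := by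
  have h1 := (Real.hasDerivAt_cos θ).const_mul (γ 0 0)
  have h2 := (Real.hasDerivAt_sin θ).const_mul (γ 0 1)
  exact (h1.fun_add h2).congr_deriv (by simp only [Ad]; ring)

lemma hasDerivAt_Bf (θ : ℝ) : HasDerivAt (Bf γ) (Bd γ θ) θ := by
  have h1 := (Real.hasDerivAt_cos θ).const_mul (γ 1 0)
  have h2 := (Real.hasDerivAt_sin θ).const_mul (γ 1 1)
  exact (h1.fun_add h2).congr_deriv (by simp only [Bd]; ring)

lemma hasDerivAt_nf (θ : ℝ) :
    HasDerivAt (nf γ) (2 * (Af γ θ * Ad γ θ + Bf γ θ * Bd γ θ)) θ := by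
  have h1 := ((hasDerivAt_Af (γ := γ) θ).fun_pow 2)
  have h2 := ((hasDerivAt_Bf (γ := γ) θ).fun_pow 2)
  have h3 := h1.fun_add h2
  have h4 : (fun t => Af γ t ^ 2 + Bf γ t ^ 2) = nf γ := rfl
  rw [h4] at h3
  exact h3.congr_deriv (by rw [show (2:ℕ) - 1 = 1 from rfl]; push_cast; ring)

lemma hasDerivAt_zf (θ : ℝ) :
    HasDerivAt (zf γ) ((Ad γ θ : ℂ) + (Bd γ θ : ℂ) * I) θ := by
  have h1 : HasDerivAt (fun t : ℝ => ((Af γ t : ℝ) : ℂ)) ((Ad γ θ : ℂ)) θ :=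
    (hasDerivAt_Af (γ := γ) θ).ofReal_comp
  have h2 : HasDerivAt (fun t : ℝ => ((Bf γ t : ℝ) : ℂ)) ((Bd γ θ : ℂ)) θ :=
    (hasDerivAt_Bf (γ := γ) θ).ofReal_comp
  exact h1.fun_add (h2.mul_const I)

lemma pow_hasDerivAt {f : ℝ → ℂ} {f' : ℂ} {x : ℝ} (hf : HasDerivAt f f' x) (k : ℕ) :
    HasDerivAt (fun t => f t ^ k) ((k : ℂ) * f x ^ (k - 1) * f') x := by
  induction k with
  | zero => simpa using hasDerivAt_const x (1 : ℂ)
  | succ n ih =>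
      have := ih.mul hf
      have h2 : HasDerivAt (fun t => f t ^ n * f t)
          ((n : ℂ) * f x ^ (n - 1) * f' * f x + f x ^ n * f') x := this
      have h3 : (fun t => f t ^ n * f t) = fun t => f t ^ (n + 1) := by
        funext t; rw [← pow_succ]
      rw [h3] at h2
      convert h2 using 1
      cases n with
      | zero => norm_num
      | succ m =>
          simp only [Nat.add_sub_cancel, Nat.succ_sub_one]
          push_cast
          rw [pow_succ]
          ring

lemma quad_id (A B Ad Bd : ℂ) :
    2 * (A * Bd - Ad * B) * I * (A + B * I) ^ 2 =
      2 * (A + B * I) * (Ad + Bd * I) * (A ^ 2 + B ^ 2) -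
        (A + B * I) ^ 2 * (2 * (A * Ad + B * Bd)) := by
  linear_combination (2 * B * (A + B * I) * (A * Bd - Ad * B)) * Complex.I_sq

lemma hasDerivAt_wf (hγ : 0 < γ.det) (θ : ℝ) :
    HasDerivAt (wf γ) ((2 * γ.det * I / ((nf γ θ : ℝ) : ℂ)) * wf γ θ) θ := by
  have hz := hasDerivAt_zf (γ := γ) θ
  have hz2 := (pow_hasDerivAt hz 2)
  have hn : HasDerivAt (fun t : ℝ => ((nf γ t : ℝ) : ℂ))
      ((2 * (Af γ θ * Ad γ θ + Bf γ θ * Bd γ θ) : ℝ) : ℂ) θ :=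
    (hasDerivAt_nf (γ := γ) θ).ofReal_comp
  have hn0 : ((nf γ θ : ℝ) : ℂ) ≠ 0 := by exact_mod_cast (nf_pos hγ θ).ne'
  have hdiv := hz2.div hn hn0
  have : HasDerivAt (wf γ)
      (((2 : ℂ) * zf γ θ ^ (2 - 1) * ((Ad γ θ : ℂ) + (Bd γ θ : ℂ) * I) * ((nf γ θ : ℝ) : ℂ) -
          zf γ θ ^ 2 * ((2 * (Af γ θ * Ad γ θ + Bf γ θ * Bd γ θ) : ℝ) : ℂ)) /
        ((nf γ θ : ℝ) : ℂ) ^ 2) θ := hdiv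
  convert this using 1
  have hdet : Af γ θ * Bd γ θ - Ad γ θ * Bf γ θ = γ.det := AB_det θ
  have hnf : nf γ θ = Af γ θ ^ 2 + Bf γ θ ^ 2 := rfl
  have hnfC : ((nf γ θ : ℝ) : ℂ) = (Af γ θ : ℂ) ^ 2 + (Bf γ θ : ℂ) ^ 2 := by
    rw [hnf]; push_cast; ring
  have hdetC : (γ.det : ℂ) = (Af γ θ : ℂ) * (Bd γ θ : ℂ) - (Ad γ θ : ℂ) * (Bf γ θ : ℂ) := by
    rw [← hdet]; push_cast; ring
  have hx : (Af γ θ : ℂ) ^ 2 + (Bf γ θ : ℂ) ^ 2 ≠ 0 := by rw [← hnfC]; exact hn0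
  rw [wf, zf, hnfC, hdetC]
  push_cast
  rw [div_mul_div_comm, div_eq_div_iff (mul_ne_zero hx hx) (pow_ne_zero 2 hx)]
  linear_combination ((((Af γ θ : ℂ)) ^ 2 + ((Bf γ θ : ℂ)) ^ 2) ^ 2) *
    quad_id (Af γ θ : ℂ) (Bf γ θ : ℂ) (Ad γ θ : ℂ) (Bd γ θ : ℂ)

def Ff (γ : Matrix (Fin 2) (Fin 2) ℝ) (lam : ℂ) (θ : ℝ) : ℂ :=
  ((jmat γ θ : ℝ) : ℂ) ^ (-1 - lam)

lemma contDiff_Af : ContDiff ℝ (⊤ : ℕ∞) (Af γ) :=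
  (contDiff_const.mul Real.contDiff_cos).add (contDiff_const.mul Real.contDiff_sin)

lemma contDiff_Bf : ContDiff ℝ (⊤ : ℕ∞) (Bf γ) :=
  (contDiff_const.mul Real.contDiff_cos).add (contDiff_const.mul Real.contDiff_sin)

lemma contDiff_nf : ContDiff ℝ (⊤ : ℕ∞) (nf γ) :=
  ((contDiff_Af (γ := γ)).pow 2).add ((contDiff_Bf (γ := γ)).pow 2)

lemma contDiff_ofReal_comp {f : ℝ → ℝ} (hf : ContDiff ℝ (⊤ : ℕ∞) f) :
    ContDiff ℝ (⊤ : ℕ∞) (fun t => ((f t : ℝ) : ℂ)) :=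
  Complex.ofRealCLM.contDiff.comp hf

lemma contDiff_zf : ContDiff ℝ (⊤ : ℕ∞) (zf γ) :=
  (contDiff_ofReal_comp (contDiff_Af (γ := γ))).add
    ((contDiff_ofReal_comp (contDiff_Bf (γ := γ))).mul contDiff_const)

lemma contDiff_nfC (hγ : 0 < γ.det) :
    ContDiff ℝ (⊤ : ℕ∞) (fun t => ((nf γ t : ℝ) : ℂ)) :=
  contDiff_ofReal_comp (contDiff_nf (γ := γ))

lemma nfC_ne (hγ : 0 < γ.det) (θ : ℝ) : ((nf γ θ : ℝ) : ℂ) ≠ 0 := by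
  exact_mod_cast (nf_pos hγ θ).ne'

lemma contDiff_wf (hγ : 0 < γ.det) : ContDiff ℝ (⊤ : ℕ∞) (wf γ) := by
  have h := ((contDiff_zf (γ := γ)).pow 2).mul ((contDiff_nfC hγ).inv (nfC_ne hγ))
  have he : wf γ = fun t => zf γ t ^ 2 * ((nf γ t : ℝ) : ℂ)⁻¹ := by
    funext t; rw [wf, div_eq_mul_inv]
  rw [he]; exact h

lemma contDiff_jmat (hγ : 0 < γ.det) : ContDiff ℝ (⊤ : ℕ∞) (jmat γ) := by
  rw [contDiff_iff_contDiffAt]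
  intro θ
  exact (Real.contDiffAt_sqrt (nf_pos hγ θ).ne').comp θ (contDiff_nf (γ := γ)).contDiffAt

lemma Ff_eq (hγ : 0 < γ.det) (lam : ℂ) :
    Ff γ lam = fun θ => Complex.exp (((Real.log (jmat γ θ) : ℝ) : ℂ) * (-1 - lam)) := by
  funext θ
  have hj := jmat_pos hγ θ
  have h0 : ((jmat γ θ : ℝ) : ℂ) ≠ 0 := by exact_mod_cast hj.ne'
  rw [Ff, Complex.cpow_def_of_ne_zero h0, Complex.ofReal_log hj.le]

lemma contDiff_Ff (hγ : 0 < γ.det) (lam : ℂ) : ContDiff ℝ (⊤ : ℕ∞) (Ff γ lam) := by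
  rw [Ff_eq hγ lam, contDiff_iff_contDiffAt]
  intro θ
  have hlog : ContDiffAt ℝ (⊤ : ℕ∞) (fun t => Real.log (jmat γ t)) θ :=
    (Real.contDiffAt_log.2 (jmat_pos hγ θ).ne').comp θ (contDiff_jmat hγ).contDiffAt
  have h2 : ContDiffAt ℝ (⊤ : ℕ∞)
      (fun t => ((Real.log (jmat γ t) : ℝ) : ℂ) * (-1 - lam)) θ :=
    (Complex.ofRealCLM.contDiff.contDiffAt.comp θ hlog).mul contDiffAt_const
  exact h2.cexp

lemma cos_sin_arg (hγ : 0 < γ.det) (θ : ℝ) :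
    Real.cos (zf γ θ).arg = Af γ θ / jmat γ θ ∧
      Real.sin (zf γ θ).arg = Bf γ θ / jmat γ θ := by
  constructor
  · rw [Complex.cos_arg (zf_ne hγ θ), zf_re, abs_zf hγ]
  · rw [Complex.sin_arg, zf_im, abs_zf hγ]

lemma exists_isAct (hγ : 0 < γ.det) (θ : ℝ) : ∃ ψ, IsAct γ θ ψ := by
  obtain ⟨hc, hs⟩ := cos_sin_arg hγ θ
  set α := (zf γ θ).arg with hα
  have hlt := Complex.arg_le_pi (zf γ θ)
  have hgt := Complex.neg_pi_lt_arg (zf γ θ)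
  have hAj : (γ 0 0 * Real.cos θ + γ 0 1 * Real.sin θ) / jmat γ θ = Af γ θ / jmat γ θ := rfl
  have hBj : (γ 1 0 * Real.cos θ + γ 1 1 * Real.sin θ) / jmat γ θ = Bf γ θ / jmat γ θ := rfl
  rcases lt_or_ge α 0 with hneg | hpos
  · refine ⟨α + Real.pi, ⟨by constructor <;> [linarith; linarith], -1, Or.inr rfl, ?_, ?_⟩⟩
    · rw [hAj, Real.cos_add_pi, hc]; ring
    · rw [hBj, Real.sin_add_pi, hs]; ring
  · rcases lt_or_ge α Real.pi with hπ | hπ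
    · exact ⟨α, ⟨⟨hpos, hπ⟩, 1, Or.inl rfl, by rw [hAj, hc]; ring, by rw [hBj, hs]; ring⟩⟩
    · have hαπ : α = Real.pi := le_antisymm hlt hπ
      refine ⟨0, ⟨⟨le_refl 0, Real.pi_pos⟩, -1, Or.inr rfl, ?_, ?_⟩⟩
      · rw [hAj]
        have : Real.cos α = -1 := by rw [hαπ]; exact Real.cos_pi
        rw [this] at hc
        rw [← hc]; norm_num
      · rw [hBj]
        have : Real.sin α = 0 := by rw [hαπ]; exact Real.sin_pi
        rw [this] at hs
        rw [← hs]; norm_num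

lemma isAct_mact (hγ : 0 < γ.det) (θ : ℝ) : IsAct γ θ (mact γ θ) := by
  have h := exists_isAct hγ θ
  rw [mact, dif_pos h]
  exact h.choose_spec

lemma exp_mact (hγ : 0 < γ.det) (θ : ℝ) :
    Complex.exp (2 * ((mact γ θ : ℝ) : ℂ) * I) = wf γ θ := by
  obtain ⟨_, ε, hε, hcos, hsin⟩ := isAct_mact hγ θ
  have hA : γ 0 0 * Real.cos θ + γ 0 1 * Real.sin θ = Af γ θ := rfl
  have hB : γ 1 0 * Real.cos θ + γ 1 1 * Real.sin θ = Bf γ θ := rfl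
  rw [hA] at hcos
  rw [hB] at hsin
  have hj := jmat_pos hγ θ
  have h1 : Complex.exp (((mact γ θ : ℝ) : ℂ) * I) =
      (ε : ℂ) * (zf γ θ / ((jmat γ θ : ℝ) : ℂ)) := by
    rw [Complex.exp_mul_I, ← Complex.ofReal_cos, ← Complex.ofReal_sin, hcos, hsin, zf]
    push_cast
    ring
  have h2 : Complex.exp (2 * ((mact γ θ : ℝ) : ℂ) * I) =
      Complex.exp (((mact γ θ : ℝ) : ℂ) * I) ^ 2 := by
    rw [← Complex.exp_nat_mul]; ring_nf
  rw [h2, h1]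
  have hε2 : (ε : ℂ) ^ 2 = 1 := by
    rcases hε with h | h <;> rw [h] <;> norm_num
  have hjsq : ((jmat γ θ : ℝ) : ℂ) ^ 2 = ((nf γ θ : ℝ) : ℂ) := by
    exact_mod_cast congrArg (fun x : ℝ => (x : ℂ)) (jmat_sq hγ θ)
  rw [wf, ← hjsq]
  rw [mul_pow, div_pow, hε2, one_mul]

lemma exp_mact_pow (hγ : 0 < γ.det) (θ : ℝ) (k : ℕ) :
    Complex.exp (2 * (k : ℂ) * I * ((mact γ θ : ℝ) : ℂ)) = wf γ θ ^ k := by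
  rw [← exp_mact hγ θ, ← Complex.exp_nat_mul]
  ring_nf

def qf (γ : Matrix (Fin 2) (Fin 2) ℝ) (θ : ℝ) : ℂ := 2 * γ.det * I / ((nf γ θ : ℝ) : ℂ)

lemma contDiff_qf (hγ : 0 < γ.det) : ContDiff ℝ (⊤ : ℕ∞) (qf γ) := by
  have h : ContDiff ℝ (⊤ : ℕ∞) (fun t => (2 * (γ.det : ℂ) * I) * ((nf γ t : ℝ) : ℂ)⁻¹) :=
    contDiff_const.mul ((contDiff_nfC hγ).inv (nfC_ne hγ))
  have he : qf γ = fun t => (2 * (γ.det : ℂ) * I) * ((nf γ t : ℝ) : ℂ)⁻¹ := by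
    funext t; exact div_eq_mul_inv _ _
  rw [he]; exact h

lemma deriv_smooth {f : ℝ → ℂ} (hf : ContDiff ℝ (⊤ : ℕ∞) f) :
    ContDiff ℝ (⊤ : ℕ∞) (deriv f) := by
  have := hf.iterate_deriv 1
  simpa using this

lemma pd_const_mul (D : ℂ) (g : ℝ → ℂ) : pd (fun t => D * g t) = fun t => D * pd g t := by
  funext t
  rw [pd, pd, deriv_const_mul_field]
  ring

lemma pd_iter_const_mul (D : ℂ) : ∀ (m : ℕ) (g : ℝ → ℂ),
    pd^[m] (fun t => D * g t) = fun t => D * pd^[m] g t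
  | 0, g => by simp
  | (n + 1), g => by
      rw [Function.iterate_succ_apply, pd_const_mul, pd_iter_const_mul D n (pd g),
        ← Function.iterate_succ_apply]

lemma pd_mul_wpow (hγ : 0 < γ.det) {G : ℝ → ℂ} (hG : Differentiable ℝ G) (k : ℕ) (θ : ℝ) :
    pd (fun t => wf γ t ^ k * G t) θ =
      wf γ θ ^ k * (G θ + deriv G θ + (k : ℂ) * qf γ θ * G θ) := by
  have hw := pow_hasDerivAt (hasDerivAt_wf hγ θ) k
  have hq : (2 * (γ.det : ℂ) * I / ((nf γ θ : ℝ) : ℂ)) = qf γ θ := rfl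
  have hprod := hw.fun_mul (hG θ).hasDerivAt
  rw [pd, hprod.deriv]
  cases k with
  | zero => simp
  | succ m =>
      simp only [Nat.add_sub_cancel]
      rw [hq]
      push_cast
      rw [pow_succ]
      ring

lemma key_induction (hγ : 0 < γ.det) (lam : ℂ) (m : ℕ) :
    ∃ c : ℕ → ℝ → ℂ, (∀ r, ContDiff ℝ (⊤ : ℕ∞) (c r)) ∧
      (∀ r, m < r → c r = fun _ => 0) ∧
      (c m = fun θ => Ff γ lam θ * qf γ θ ^ m) ∧
      ∀ k : ℕ, ∀ θ : ℝ, pd^[m] (fun t => Ff γ lam t * wf γ t ^ k) θ =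
        wf γ θ ^ k * ∑ r ∈ Finset.range (m + 1), c r θ * (k : ℂ) ^ r := by
  induction m with
  | zero =>
      refine ⟨fun r => if r = 0 then Ff γ lam else fun _ => 0, ?_, ?_, ?_, ?_⟩
      · intro r
        dsimp only
        rcases Nat.eq_zero_or_pos r with h | h
        · subst h; simpa using contDiff_Ff hγ lam
        · rw [if_neg h.ne']; exact contDiff_const
      · intro r hr; dsimp only; rw [if_neg hr.ne']
      · funext θ; simp
      · intro k θ
        simp only [Function.iterate_zero_apply, zero_add, Finset.sum_range_one, pow_zero,
          mul_one, eq_self_iff_true, if_true]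
        ring
  | succ n ih =>
      obtain ⟨c, hsm, hvan, htop, hform⟩ := ih
      refine ⟨fun r θ => c r θ + deriv (c r) θ + qf γ θ * (if r = 0 then 0 else c (r - 1) θ),
        ?_, ?_, ?_, ?_⟩
      · intro r
        apply ContDiff.add (ContDiff.add (hsm r) (deriv_smooth (hsm r)))
        cases r with
        | zero => simpa using contDiff_const
        | succ i => simpa using (contDiff_qf hγ).mul (hsm i)
      · intro r hr
        funext θ
        dsimp only
        have h1 : c r = fun _ => 0 := hvan r (by omega)
        have h2 : c (r - 1) = fun _ => 0 := hvan (r - 1) (by omega)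
        rw [h1, h2]
        simp
      · funext θ
        have h1 : c (n + 1) = fun _ => 0 := hvan (n + 1) (by omega)
        show c (n + 1) θ + deriv (c (n + 1)) θ +
            qf γ θ * (if n + 1 = 0 then 0 else c (n + 1 - 1) θ) = _
        rw [h1]
        simp only [deriv_const', if_neg (Nat.succ_ne_zero n), Nat.add_sub_cancel, htop]
        rw [pow_succ]
        ring
      · intro k θ
        rw [Function.iterate_succ_apply']
        have hGfun : pd^[n] (fun t => Ff γ lam t * wf γ t ^ k) =
            fun t => wf γ t ^ k * ∑ r ∈ Finset.range (n + 1), c r t * (k : ℂ) ^ r :=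
          funext (hform k)
        rw [hGfun]
        set G : ℝ → ℂ := fun t => ∑ r ∈ Finset.range (n + 1), c r t * (k : ℂ) ^ r with hG
        have hdiff : Differentiable ℝ G := by
          apply Differentiable.fun_sum
          intro r _
          exact ((hsm r).differentiable (by simp)).mul_const _
        have hGderiv : deriv G θ = ∑ r ∈ Finset.range (n + 1), deriv (c r) θ * (k : ℂ) ^ r := by
          have := HasDerivAt.fun_sum (fun r (_ : r ∈ Finset.range (n + 1)) =>
            (((hsm r).differentiable (by simp) θ).hasDerivAt.mul_const
              ((k : ℂ) ^ r)))
          exact this.deriv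
        rw [pd_mul_wpow hγ hdiff k θ, hGderiv]
        congr 1
        -- sum manipulation
        have hc1 : c (n + 1) = fun _ => 0 := hvan (n + 1) (by omega)
        have e1 : ∑ r ∈ Finset.range (n + 2), (c r θ + deriv (c r) θ +
              qf γ θ * (if r = 0 then 0 else c (r - 1) θ)) * (k : ℂ) ^ r =
            (∑ r ∈ Finset.range (n + 2), c r θ * (k : ℂ) ^ r) +
            (∑ r ∈ Finset.range (n + 2), deriv (c r) θ * (k : ℂ) ^ r) +
            (∑ r ∈ Finset.range (n + 2),
              qf γ θ * (if r = 0 then 0 else c (r - 1) θ) * (k : ℂ) ^ r) := by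
          rw [← Finset.sum_add_distrib, ← Finset.sum_add_distrib]
          congr 1
          funext r
          ring
        rw [e1]
        have e2 : ∑ r ∈ Finset.range (n + 2), c r θ * (k : ℂ) ^ r = G θ := by
          rw [Finset.sum_range_succ, hc1]
          simp [hG]
        have e3 : ∑ r ∈ Finset.range (n + 2), deriv (c r) θ * (k : ℂ) ^ r =
            ∑ r ∈ Finset.range (n + 1), deriv (c r) θ * (k : ℂ) ^ r := by
          rw [Finset.sum_range_succ, hc1]
          simp
        have e4 : ∑ r ∈ Finset.range (n + 2),
            qf γ θ * (if r = 0 then 0 else c (r - 1) θ) * (k : ℂ) ^ r =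
            qf γ θ * (k : ℂ) * G θ := by
          rw [Finset.sum_range_succ']
          simp only [if_neg (Nat.succ_ne_zero _), Nat.add_sub_cancel, eq_self_iff_true, if_true,
            mul_zero, pow_zero, mul_one, add_zero, zero_mul]
          rw [hG, Finset.mul_sum]
          apply Finset.sum_congr rfl
          intro r _
          rw [pow_succ]
          ring
        rw [e2, e3, e4]
        ring

def phik (k : ℕ) : ℝ → ℂ := fun t => Complex.exp (2 * (k : ℂ) * I * (t : ℂ))

lemma contDiff_phik (k : ℕ) : ContDiff ℝ (⊤ : ℕ∞) (phik k) := by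
  apply Complex.contDiff_exp.comp
  exact contDiff_const.mul Complex.ofRealCLM.contDiff

lemma periodic_phik (k : ℕ) : Function.Periodic (phik k) Real.pi := by
  intro t
  rw [phik, phik]
  push_cast
  rw [mul_add, Complex.exp_add]
  have h1 : Complex.exp (2 * (k : ℂ) * I * (Real.pi : ℂ)) = 1 := by
    have := Complex.exp_int_mul_two_pi_mul_I (k : ℤ)
    rw [← this]
    congr 1
    push_cast
    ring
  rw [h1, mul_one]

lemma hasDerivAt_phik (k : ℕ) (t : ℝ) :
    HasDerivAt (phik k) (2 * (k : ℂ) * I * phik k t) t := by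
  have h1 := (Complex.ofRealCLM.hasDerivAt (x := t)).const_mul (2 * (k : ℂ) * I)
  simp only [Complex.ofRealCLM_apply, Complex.ofReal_one] at h1
  have h2 := h1.cexp
  have h3 : phik k = fun y : ℝ => Complex.exp (2 * (k : ℂ) * I * (y : ℂ)) := rfl
  rw [h3]
  convert h2 using 1
  ring

lemma pd_phik (k : ℕ) : pd (phik k) = fun t => (1 + 2 * (k : ℂ) * I) * phik k t := by
  funext t
  rw [pd, (hasDerivAt_phik k t).deriv]
  ring

lemma pd_iter_phik (k : ℕ) (j : ℕ) :
    pd^[j] (phik k) = fun t => (1 + 2 * (k : ℂ) * I) ^ j * phik k t := by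
  induction j with
  | zero => simp
  | succ n ih =>
      rw [Function.iterate_succ_apply, pd_phik, pd_iter_const_mul _ n (phik k), ih]
      funext t
      rw [pow_succ]
      ring

lemma phik_mact (hγ : 0 < γ.det) (k : ℕ) (θ : ℝ) :
    phik k (mact γ θ) = wf γ θ ^ k := by
  rw [phik, exp_mact_pow hγ θ k]

lemma slash_phik (hγ : 0 < γ.det) (lam : ℂ) (k : ℕ) :
    slash lam γ (phik k) =
      fun t => (γ.det : ℂ) ^ (1 + lam / 2) * (Ff γ lam t * wf γ t ^ k) := by
  funext t
  rw [slash, phik_mact hγ k t, mul_assoc]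
  rfl

open Polynomial in
lemma coeff_extract (s : ℕ) (a : ℕ → ℂ) (v : Fin (s + 1) → ℂ)
    (h : ∀ k : ℕ, ∑ r ∈ Finset.range (s + 1), a r * (k : ℂ) ^ r =
      ∑ j : Fin (s + 1), v j * (1 + 2 * (k : ℂ) * I) ^ (j : ℕ)) :
    a s = v (Fin.last s) * (2 * I) ^ s := by
  classical
  set p : ℂ[X] := C (2 * I) * X + 1 with hp
  set P : ℂ[X] := ∑ r ∈ Finset.range (s + 1), C (a r) * X ^ r with hP
  set Q : ℂ[X] := ∑ j : Fin (s + 1), C (v j) * p ^ (j : ℕ) with hQ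
  have hevalP : ∀ k : ℕ, P.eval (k : ℂ) = ∑ r ∈ Finset.range (s + 1), a r * (k : ℂ) ^ r := by
    intro k
    rw [hP, Polynomial.eval_finset_sum]
    simp
  have hevalQ : ∀ k : ℕ, Q.eval (k : ℂ) = ∑ j : Fin (s + 1), v j * (1 + 2 * (k : ℂ) * I) ^ (j : ℕ) := by
    intro k
    rw [hQ, Polynomial.eval_finset_sum]
    apply Finset.sum_congr rfl
    intro j _
    have he : (2 * I * (k : ℂ) + 1) = 1 + 2 * (k : ℂ) * I := by ring
    rw [Polynomial.eval_mul, Polynomial.eval_pow, Polynomial.eval_C, hp, Polynomial.eval_add,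
      Polynomial.eval_mul, Polynomial.eval_C, Polynomial.eval_X, Polynomial.eval_one, he]
  have hPQ : P = Q := by
    have hroot : ∀ k : ℕ, (P - Q).IsRoot ((k : ℂ)) := by
      intro k
      rw [Polynomial.IsRoot, Polynomial.eval_sub, hevalP, hevalQ, h k, sub_self]
    have hsub : Set.range ((↑· : ℕ → ℂ)) ⊆ {x | (P - Q).IsRoot x} := by
      rintro x ⟨k, rfl⟩
      exact hroot k
    have hinf : {x | (P - Q).IsRoot x}.Infinite :=
      (Set.infinite_range_of_injective Nat.cast_injective).mono hsub
    have := Polynomial.eq_zero_of_infinite_isRoot _ hinf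
    exact sub_eq_zero.1 this
  have hp0 : (2 * I : ℂ) ≠ 0 := by simp [Complex.I_ne_zero]
  have hpdeg : p.natDegree = 1 := by
    rw [hp]
    have : (1 : ℂ[X]) = C 1 := by simp
    rw [this]
    exact Polynomial.natDegree_linear hp0
  have hplead : p.leadingCoeff = 2 * I := by
    rw [Polynomial.leadingCoeff, hpdeg, hp]
    simp [Polynomial.coeff_one]
  have hPcoeff : P.coeff s = a s := by
    rw [hP, Polynomial.finset_sum_coeff]
    simp only [Polynomial.coeff_C_mul, Polynomial.coeff_X_pow]
    rw [Finset.sum_eq_single s]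
    · simp
    · intro r _ hr
      simp [Ne.symm hr]
    · intro hs
      exact absurd (Finset.self_mem_range_succ s) hs
  have hQcoeff : Q.coeff s = v (Fin.last s) * (2 * I) ^ s := by
    rw [hQ, Polynomial.finset_sum_coeff]
    rw [Fin.sum_univ_castSucc]
    have hz : ∀ j : Fin s, (C (v j.castSucc) * p ^ ((j.castSucc : ℕ))).coeff s = 0 := by
      intro j
      rw [Polynomial.coeff_C_mul]
      have hd : (p ^ ((j.castSucc : ℕ))).natDegree < s := by
        have h1 := Polynomial.natDegree_pow_le (p := p) (n := ((j.castSucc : ℕ)))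
        have h2 : ((j.castSucc : ℕ)) * p.natDegree < s := by
          rw [hpdeg]
          simpa using j.isLt
        omega
      rw [Polynomial.coeff_eq_zero_of_natDegree_lt hd, mul_zero]
    rw [Finset.sum_congr rfl (fun j _ => hz j), Finset.sum_const_zero, zero_add]
    rw [Polynomial.coeff_C_mul]
    have hdeg : (p ^ s).natDegree = s := by
      rw [Polynomial.natDegree_pow, hpdeg, mul_one]
    have : (p ^ s).coeff s = p.leadingCoeff ^ s := by
      rw [← Polynomial.leadingCoeff_pow, Polynomial.leadingCoeff, hdeg]
    simp only [Fin.val_last]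
    rw [this, hplead]
  rw [← hPcoeff, hPQ, hQcoeff]

end GTaux

open GTaux Complex in
/-- The top function: `u_s(θ) = (det γ)^s · j(γ,θ)^{-1-λ-2s}`. -/
theorem goodTuple_top (lam : ℂ) (γ : Matrix (Fin 2) (Fin 2) ℝ) (hγ : 0 < γ.det) (s : ℕ)
    (u : Fin (s + 1) → ℝ → ℂ) (hu : GoodTuple lam γ s u) (θ : ℝ) :
    u (Fin.last s) θ =
      (γ.det : ℂ) ^ (s : ℕ) * ((jmat γ θ : ℝ) : ℂ) ^ (-1 - lam - 2 * (s : ℂ)) := by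
  obtain ⟨c, hsm, hvan, htop, hform⟩ := key_induction (γ := γ) hγ lam s
  have hdet0 : (γ.det : ℂ) ≠ 0 := by exact_mod_cast hγ.ne'
  have hDne : (γ.det : ℂ) ^ (1 + lam / 2) ≠ 0 := by
    rw [Complex.cpow_def_of_ne_zero hdet0]; exact Complex.exp_ne_zero _
  have hwk : ∀ k : ℕ, wf γ θ ^ k ≠ 0 := fun k => pow_ne_zero k (wf_ne hγ θ)
  have hmain : ∀ k : ℕ, ∑ r ∈ Finset.range (s + 1), c r θ * (k : ℂ) ^ r =
      ∑ j : Fin (s + 1), u j θ * (1 + 2 * (k : ℂ) * I) ^ (j : ℕ) := by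
    intro k
    have h2 := hu.2 (phik k) (contDiff_phik k) (periodic_phik k) θ
    rw [slash_phik hγ lam k] at h2
    simp only [pd_iter_const_mul, pd_iter_phik, phik_mact hγ] at h2
    rw [hform k θ] at h2
    have h3 := mul_left_cancel₀ hDne h2
    have h4 : ∑ j : Fin (s + 1), u j θ * ((1 + 2 * (k : ℂ) * I) ^ (j : ℕ) * wf γ θ ^ k) =
        (∑ j : Fin (s + 1), u j θ * (1 + 2 * (k : ℂ) * I) ^ (j : ℕ)) * wf γ θ ^ k := by
      rw [Finset.sum_mul]
      apply Finset.sum_congr rfl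
      intro j _
      ring
    rw [h4] at h3
    exact mul_left_cancel₀ (hwk k)
      (h3.trans (mul_comm (∑ j : Fin (s + 1), u j θ * (1 + 2 * (k : ℂ) * I) ^ (j : ℕ))
        (wf γ θ ^ k)))
  have hex := coeff_extract s (fun r => c r θ) (fun j => u j θ) hmain
  have htopθ : c s θ = Ff γ lam θ * qf γ θ ^ s := by rw [htop]
  have h2I : ((2 * I : ℂ)) ≠ 0 := by simp [Complex.I_ne_zero]
  have h2Is : ((2 * I : ℂ) ^ s) ≠ 0 := pow_ne_zero _ h2I
  have hu' : u (Fin.last s) θ = Ff γ lam θ * qf γ θ ^ s / (2 * I) ^ s := by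
    rw [← htopθ, hex]
    field_simp
  rw [hu']
  have hj0 : ((jmat γ θ : ℝ) : ℂ) ≠ 0 := by exact_mod_cast (jmat_pos hγ θ).ne'
  have hn0 : ((nf γ θ : ℝ) : ℂ) ≠ 0 := nfC_ne hγ θ
  have hjsq : ((jmat γ θ : ℝ) : ℂ) ^ 2 = ((nf γ θ : ℝ) : ℂ) := by
    exact_mod_cast congrArg (fun x : ℝ => (x : ℂ)) (jmat_sq hγ θ)
  have hqf : qf γ θ ^ s / (2 * I) ^ s = (γ.det : ℂ) ^ s / ((nf γ θ : ℝ) : ℂ) ^ s := by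
    have hq : qf γ θ = 2 * (γ.det : ℂ) * I / ((nf γ θ : ℝ) : ℂ) := rfl
    rw [hq, div_pow, show (2 * (γ.det : ℂ) * I) = (2 * I) * (γ.det : ℂ) from by ring, mul_pow]
    field_simp
  have hsplit : ((jmat γ θ : ℝ) : ℂ) ^ (-1 - lam - 2 * (s : ℂ)) =
      ((jmat γ θ : ℝ) : ℂ) ^ (-1 - lam) * ((jmat γ θ : ℝ) : ℂ) ^ (-(2 * (s : ℂ))) := by
    rw [show (-1 - lam - 2 * (s : ℂ)) = (-1 - lam) + (-(2 * (s : ℂ))) from by ring,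
      Complex.cpow_add _ _ hj0]
  have hneg : ((jmat γ θ : ℝ) : ℂ) ^ (-(2 * (s : ℂ))) = (((nf γ θ : ℝ) : ℂ) ^ s)⁻¹ := by
    have h1 : (-(2 * (s : ℂ))) = ((-(2 * s : ℤ) : ℤ) : ℂ) := by push_cast; ring
    rw [h1, Complex.cpow_intCast, zpow_neg]
    congr 1
    rw [show (2 * (s : ℤ)) = ((2 * s : ℕ) : ℤ) from by push_cast; ring]
    rw [zpow_natCast, ← hjsq, pow_mul]
  rw [hsplit, hneg, mul_div_assoc, hqf]
  have hFf : Ff γ lam θ = ((jmat γ θ : ℝ) : ℂ) ^ (-1 - lam) := rfl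
  rw [hFf, div_eq_mul_inv]
  ring


end
end

section
/- Fix λ ∈ ℂ, s ∈ ℕ₀, let γ be a 2×2 matrix with rational entries and positive determinant, and let u₀, …, u_s be the unique continuous π-periodic functions with ∂^s(φ|_λ γ)(θ) = (det γ)^{1+λ/2} · Σ_{j=0}^{s} u_j(θ)·(∂^j φ)(γ·θ) for all C^∞ π-periodic φ and all θ. Then for every θ₀ ∈ Ξ and every j = 0, …, s one has u_j(θ₀) ∈ F_λ. -/
noncomputable section

/-- `F_λ = ℚ(λ, √n, n^{λ/2} | n ∈ ℕ)`, as a subfield of `ℂ`. -/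
def Flam (lam : ℂ) : Subfield ℂ :=
  Subfield.closure ({lam} ∪ {x : ℂ | ∃ n : ℕ, x = (Real.sqrt n : ℝ)} ∪
    {x : ℂ | ∃ n : ℕ, 1 ≤ n ∧ x = Complex.exp ((lam / 2) * Real.log n)})

namespace AuxFlam

/-- Functions built from `cos`, `sin`, `(G ·)⁻¹` and constants in `E`. -/
inductive Wp (E : Subfield ℂ) (G : ℝ → ℝ) : (ℝ → ℂ) → Prop
  | const (c : ℂ) (h : c ∈ E) : Wp E G fun _ => c
  | cos : Wp E G fun θ => (Real.cos θ : ℂ)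
  | sin : Wp E G fun θ => (Real.sin θ : ℂ)
  | ginv : Wp E G fun θ => ((G θ : ℝ) : ℂ)⁻¹
  | add {f g} : Wp E G f → Wp E G g → Wp E G fun θ => f θ + g θ
  | mul {f g} : Wp E G f → Wp E G g → Wp E G fun θ => f θ * g θ

variable {E : Subfield ℂ} {G : ℝ → ℝ}

theorem Wp.contDiff (hG : ContDiff ℝ (⊤ : ℕ∞) G) (hG0 : ∀ θ, G θ ≠ 0) {f : ℝ → ℂ}
    (hf : Wp E G f) : ContDiff ℝ (⊤ : ℕ∞) f := by
  induction hf with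
  | const c h => exact contDiff_const
  | cos => exact Complex.ofRealCLM.contDiff.comp Real.contDiff_cos
  | sin => exact Complex.ofRealCLM.contDiff.comp Real.contDiff_sin
  | ginv =>
    have h : ContDiff ℝ (⊤ : ℕ∞) (fun θ => ((G θ : ℝ) : ℂ)) := Complex.ofRealCLM.contDiff.comp hG
    exact h.inv fun θ => by exact_mod_cast hG0 θ
  | add hf hg ihf ihg => exact ihf.add ihg
  | mul hf hg ihf ihg => exact ihf.mul ihg

theorem Wp.value {θ₀ : ℝ} (hcos : ((Real.cos θ₀ : ℝ) : ℂ) ∈ E)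
    (hsin : ((Real.sin θ₀ : ℝ) : ℂ) ∈ E) (hg : ((G θ₀ : ℝ) : ℂ)⁻¹ ∈ E)
    {f : ℝ → ℂ} (hf : Wp E G f) : f θ₀ ∈ E := by
  induction hf with
  | const c h => exact h
  | cos => exact hcos
  | sin => exact hsin
  | ginv => exact hg
  | add hf hg ihf ihg => exact E.add_mem ihf ihg
  | mul hf hg ihf ihg => exact E.mul_mem ihf ihg

theorem Wp.derivMem (hG : ContDiff ℝ (⊤ : ℕ∞) G) (hG0 : ∀ θ, G θ ≠ 0)
    {dG : ℝ → ℝ} (hdG : ∀ θ, HasDerivAt G (dG θ) θ)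
    (hWdG : Wp E G fun θ => ((dG θ : ℝ) : ℂ))
    {f : ℝ → ℂ} (hf : Wp E G f) : Wp E G (deriv f) := by
  induction hf with
  | const c h =>
    have h0 : deriv (fun _ : ℝ => c) = fun _ : ℝ => (0 : ℂ) := by
      funext θ; simp
    rw [h0]; exact .const 0 E.zero_mem
  | cos =>
    have h0 : deriv (fun θ : ℝ => ((Real.cos θ : ℝ) : ℂ)) =
        fun θ => (-1 : ℂ) * ((Real.sin θ : ℝ) : ℂ) := by
      funext θ
      rw [((Real.hasDerivAt_cos θ).ofReal_comp).deriv]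
      push_cast; ring
    rw [h0]; exact .mul (.const _ (E.neg_mem E.one_mem)) .sin
  | sin =>
    have h0 : deriv (fun θ : ℝ => ((Real.sin θ : ℝ) : ℂ)) =
        fun θ => ((Real.cos θ : ℝ) : ℂ) := by
      funext θ
      rw [((Real.hasDerivAt_sin θ).ofReal_comp).deriv]
    rw [h0]; exact .cos
  | ginv =>
    have h0 : deriv (fun θ : ℝ => ((G θ : ℝ) : ℂ)⁻¹) =
        fun θ => (-1 : ℂ) * ((dG θ : ℝ) : ℂ) * (((G θ : ℝ) : ℂ)⁻¹ * ((G θ : ℝ) : ℂ)⁻¹) := by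
      funext θ
      have h1 : HasDerivAt (fun θ : ℝ => ((G θ : ℝ) : ℂ)) ((dG θ : ℝ) : ℂ) θ :=
        (hdG θ).ofReal_comp
      have hne : ((G θ : ℝ) : ℂ) ≠ 0 := by exact_mod_cast hG0 θ
      have h2 : HasDerivAt (fun x : ℝ => ((G x : ℝ) : ℂ)⁻¹)
          (-(((G θ : ℝ) : ℂ) ^ 2)⁻¹ * ((dG θ : ℝ) : ℂ)) θ := (hasDerivAt_inv hne).comp θ h1
      rw [h2.deriv, sq, mul_inv]
      ring
    rw [h0]
    exact .mul (.mul (.const _ (E.neg_mem E.one_mem)) hWdG) (.mul .ginv .ginv)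
  | @add f' g' hf' hg' ihf ihg =>
    have h0 : deriv (fun θ => f' θ + g' θ) = fun θ => deriv f' θ + deriv g' θ := by
      funext θ
      exact deriv_fun_add ((hf'.contDiff hG hG0).differentiable (by simp) θ)
        ((hg'.contDiff hG hG0).differentiable (by simp) θ)
    rw [h0]; exact .add ihf ihg
  | @mul f' g' hf' hg' ihf ihg =>
    have h0 : deriv (fun θ => f' θ * g' θ) =
        fun θ => deriv f' θ * g' θ + f' θ * deriv g' θ := by
      funext θ
      exact deriv_fun_mul ((hf'.contDiff hG hG0).differentiable (by simp) θ)
        ((hg'.contDiff hG hG0).differentiable (by simp) θ)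
    rw [h0]; exact .add (.mul ihf hg') (.mul hf' ihg)

end AuxFlam

namespace AuxFlam2
open AuxFlam

theorem pd_iterate {E : Subfield ℂ} {G : ℝ → ℝ}
    (hG : ContDiff ℝ (⊤ : ℕ∞) G) (hG0 : ∀ θ, G θ ≠ 0)
    {dG : ℝ → ℝ} (hdG : ∀ θ, HasDerivAt G (dG θ) θ)
    (hWdG : Wp E G fun θ => ((dG θ : ℝ) : ℂ))
    {Hc m : ℝ → ℂ} (hm : Wp E G m)
    (hH : ∀ θ, HasDerivAt Hc (m θ * Hc θ) θ) (K : ℂ) (n : ℕ) {w : ℝ → ℂ}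
    (hw : Wp E G w) :
    ∃ v, Wp E G v ∧ pd^[n] (fun θ => K * (Hc θ * w θ)) = fun θ => K * (Hc θ * v θ) := by
  induction n with
  | zero => exact ⟨w, hw, rfl⟩
  | succ n ih =>
    obtain ⟨v, hv, hvn⟩ := ih
    refine ⟨fun θ => v θ + (m θ * v θ + deriv v θ),
      .add hv (.add (.mul hm hv) (Wp.derivMem hG hG0 hdG hWdG hv)), ?_⟩
    rw [Function.iterate_succ_apply', hvn]
    funext θ
    have hv' : HasDerivAt v (deriv v θ) θ :=
      (((hv.contDiff hG hG0).differentiable (by simp)) θ).hasDerivAt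
    have hd : HasDerivAt (fun θ => K * (Hc θ * v θ))
        (K * ((m θ * Hc θ) * v θ + Hc θ * deriv v θ)) θ :=
      ((hH θ).mul hv').const_mul K
    show (K * (Hc θ * v θ)) + deriv (fun θ => K * (Hc θ * v θ)) θ = _
    rw [hd.deriv]
    ring

end AuxFlam2

namespace AuxFlam2

/-- Coefficient recursion for `∂`-iterates of `x cos(2kψ) + y sin(2kψ)`. -/
def ABq (k : ℕ) (P : ℚ × ℚ) : ℕ → ℚ × ℚ
  | 0 => P
  | j + 1 => ((ABq k P j).1 + 2 * k * (ABq k P j).2, (ABq k P j).2 - 2 * k * (ABq k P j).1)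

theorem hasDerivAt_trig (k : ℕ) (x y : ℂ) (ψ : ℝ) :
    HasDerivAt (fun ψ : ℝ => x * ((Real.cos (2 * k * ψ) : ℝ) : ℂ) +
      y * ((Real.sin (2 * k * ψ) : ℝ) : ℂ))
      (x * ((-Real.sin (2 * k * ψ) * (2 * k) : ℝ) : ℂ) +
       y * ((Real.cos (2 * k * ψ) * (2 * k) : ℝ) : ℂ)) ψ := by
  have hk : HasDerivAt (fun ψ : ℝ => 2 * (k : ℝ) * ψ) (2 * k) ψ := by
    simpa using (hasDerivAt_id ψ).const_mul (2 * (k : ℝ))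
  have hc : HasDerivAt (fun ψ : ℝ => Real.cos (2 * k * ψ)) (-Real.sin (2 * k * ψ) * (2 * k)) ψ :=
    (Real.hasDerivAt_cos _).comp ψ hk
  have hs : HasDerivAt (fun ψ : ℝ => Real.sin (2 * k * ψ)) (Real.cos (2 * k * ψ) * (2 * k)) ψ :=
    (Real.hasDerivAt_sin _).comp ψ hk
  exact ((hc.ofReal_comp).const_mul x).add ((hs.ofReal_comp).const_mul y)

theorem pd_trig (k : ℕ) (x y : ℂ) :
    pd (fun ψ : ℝ => x * ((Real.cos (2 * k * ψ) : ℝ) : ℂ) +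
        y * ((Real.sin (2 * k * ψ) : ℝ) : ℂ)) =
      fun ψ : ℝ => (x + 2 * k * y) * ((Real.cos (2 * k * ψ) : ℝ) : ℂ) +
        (y - 2 * k * x) * ((Real.sin (2 * k * ψ) : ℝ) : ℂ) := by
  funext ψ
  show _ + deriv _ ψ = _
  rw [(hasDerivAt_trig k x y ψ).deriv]
  push_cast
  ring

theorem pd_iter_trig (k : ℕ) (P : ℚ × ℚ) (j : ℕ) :
    pd^[j] (fun ψ : ℝ => ((P.1 : ℂ)) * ((Real.cos (2 * k * ψ) : ℝ) : ℂ) +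
        ((P.2 : ℂ)) * ((Real.sin (2 * k * ψ) : ℝ) : ℂ)) =
      fun ψ : ℝ => (((ABq k P j).1 : ℂ)) * ((Real.cos (2 * k * ψ) : ℝ) : ℂ) +
        (((ABq k P j).2 : ℂ)) * ((Real.sin (2 * k * ψ) : ℝ) : ℂ) := by
  induction j with
  | zero => rfl
  | succ j ih =>
    rw [Function.iterate_succ_apply', ih, pd_trig]
    have h1 : (((ABq k P (j + 1)).1 : ℂ)) = ((ABq k P j).1 : ℂ) + 2 * k * ((ABq k P j).2 : ℂ) := by
      show (((ABq k P j).1 + 2 * k * (ABq k P j).2 : ℚ) : ℂ) = _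
      push_cast; ring
    have h2 : (((ABq k P (j + 1)).2 : ℂ)) = ((ABq k P j).2 : ℂ) - 2 * k * ((ABq k P j).1 : ℂ) := by
      show (((ABq k P j).2 - 2 * k * (ABq k P j).1 : ℚ) : ℂ) = _
      push_cast; ring
    rw [h1, h2]

open Complex in
theorem ABq_complex (k : ℕ) (P : ℚ × ℚ) (j : ℕ) :
    (((ABq k P j).1 : ℂ)) - I * (((ABq k P j).2 : ℂ)) =
      (((P.1 : ℂ)) - I * ((P.2 : ℂ))) * (1 + 2 * k * I) ^ j := by
  induction j with
  | zero => simp [ABq]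
  | succ j ih =>
    have h1 : (ABq k P (j+1)).1 = (ABq k P j).1 + 2 * k * (ABq k P j).2 := rfl
    have h2 : (ABq k P (j+1)).2 = (ABq k P j).2 - 2 * k * (ABq k P j).1 := rfl
    rw [pow_succ, ← mul_assoc, ← ih, h1, h2]
    push_cast
    linear_combination (2 * (k : ℂ) * ((ABq k P j).2 : ℂ)) * Complex.I_sq

end AuxFlam2

namespace AuxFlam2

set_option synthInstance.maxHeartbeats 1000000 in
set_option maxHeartbeats 1000000 in
/-- If a complex linear system with coefficients in a subfield `E` is injective and
`M x` has entries in `E`, then `x` has entries in `E`. -/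
theorem mem_of_linear_system {E : Subfield ℂ} {n m : Type} [Fintype n] [Fintype m]
    [DecidableEq n] [DecidableEq m]
    (M : Matrix m n ℂ) (hM : ∀ r j, M r j ∈ E)
    (hinj : ∀ x : n → ℂ, M.mulVec x = 0 → x = 0)
    (x : n → ℂ) (hx : ∀ r, M.mulVec x r ∈ E) : ∀ j, x j ∈ E := by
  classical
  let M' : Matrix m n E := fun r j => ⟨M r j, hM r j⟩
  have key : ∀ y : n → E, Matrix.toLin' M' y = 0 → y = 0 := by
    intro y hy0
    have hy0' : M'.mulVec y = 0 := by rwa [Matrix.toLin'_apply] at hy0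
    have hc : M.mulVec (fun j => (y j : ℂ)) = 0 := by
      funext r
      have h1 := congrFun hy0' r
      rw [Pi.zero_apply] at h1
      have h2 : ((M'.mulVec y r : E) : ℂ) = 0 := by rw [h1]; rfl
      rw [Pi.zero_apply, ← h2]
      show ∑ j, M r j * (y j : ℂ) = _
      rw [Matrix.mulVec, dotProduct]
      push_cast
      rfl
    have h3 := hinj _ hc
    funext j
    have hj := congrFun h3 j
    rw [Pi.zero_apply] at hj
    rw [Pi.zero_apply]
    exact Subtype.ext (by exact_mod_cast hj)
  have hker : LinearMap.ker (Matrix.toLin' M') = ⊥ := by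
    rw [LinearMap.ker_eq_bot]
    intro y y' hy
    have h1 : Matrix.toLin' M' (y - y') = 0 := by
      rw [map_sub, hy, sub_self]
    have h2 := key _ h1
    rwa [sub_eq_zero] at h2
  obtain ⟨g, hg⟩ := LinearMap.exists_leftInverse_of_injective _ hker
  set L : Matrix n m E := LinearMap.toMatrix' g with hL
  have hLM : L * M' = 1 := by
    have h4 := congrArg LinearMap.toMatrix' hg
    rwa [LinearMap.toMatrix'_comp, LinearMap.toMatrix'_toLin', LinearMap.toMatrix'_id] at h4
  intro j
  have key2 : x j = ∑ r, ((L j r : ℂ)) * (M.mulVec x r) := by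
    have h5 : ∑ r, ((L j r : ℂ)) * (M.mulVec x r) = ∑ j', (∑ r, (L j r : ℂ) * M r j') * x j' := by
      simp only [Matrix.mulVec, dotProduct, Finset.mul_sum, Finset.sum_mul]
      rw [Finset.sum_comm]
      congr 1; funext r; congr 1; funext j'; ring
    rw [h5]
    have hone : ∀ j', (∑ r, (L j r : ℂ) * M r j') = if j = j' then 1 else 0 := by
      intro j'
      have h6 := congrFun (congrFun hLM j) j'
      have h7 : ((∑ r, L j r * M' r j' : E) : ℂ) = (((1 : Matrix n n E) j j' : E) : ℂ) := by
        rw [← h6]; rfl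
      rw [Matrix.one_apply] at h7
      push_cast at h7
      rw [h7]
      split_ifs <;> simp
    rw [Finset.sum_congr rfl fun j' _ => by rw [hone j']]
    simp
  rw [key2]
  exact E.sum_mem fun r _ => E.mul_mem (L j r).2 (hx r)

end AuxFlam2

namespace AuxFlam2

theorem vandermonde_inj {n : ℕ} (v : Fin n → ℂ) (hv : Function.Injective v)
    (x : Fin n → ℂ) (h : ∀ k, ∑ j : Fin n, v k ^ (j : ℕ) * x j = 0) : x = 0 := by
  classical
  set V := Matrix.vandermonde v with hV
  have hdet : IsUnit V.det := by
    rw [isUnit_iff_ne_zero, hV, Matrix.det_vandermonde]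
    apply Finset.prod_ne_zero_iff.mpr
    intro i _
    apply Finset.prod_ne_zero_iff.mpr
    intro j hj
    rw [Finset.mem_Ioi] at hj
    exact sub_ne_zero.mpr fun he => absurd (hv he.symm) (ne_of_lt hj)
  have hVx : V.mulVec x = 0 := by
    funext k
    rw [Pi.zero_apply, Matrix.mulVec, dotProduct]
    simpa [hV, Matrix.vandermonde] using h k
  have : x = (V⁻¹ * V).mulVec x := by rw [Matrix.nonsing_inv_mul _ hdet, Matrix.one_mulVec]
  rw [this, ← Matrix.mulVec_mulVec, hVx, Matrix.mulVec_zero]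

end AuxFlam2

namespace AuxFlam2

theorem lam_mem (lam : ℂ) : lam ∈ Flam lam :=
  Subfield.subset_closure (Or.inl (Or.inl rfl))

theorem sqrt_nat_mem (lam : ℂ) (n : ℕ) : ((Real.sqrt n : ℝ) : ℂ) ∈ Flam lam :=
  Subfield.subset_closure (Or.inl (Or.inr ⟨n, rfl⟩))

theorem explog_mem (lam : ℂ) (n : ℕ) (hn : 1 ≤ n) :
    Complex.exp ((lam / 2) * ((Real.log n : ℝ) : ℂ)) ∈ Flam lam :=
  Subfield.subset_closure (Or.inr ⟨n, hn, rfl⟩)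

theorem sqrt_rat_mem (lam : ℂ) (r : ℚ) (hr : 0 ≤ r) :
    ((Real.sqrt (r : ℝ) : ℝ) : ℂ) ∈ Flam lam := by
  have hnum : ((r.num.toNat : ℕ) : ℝ) = (r.num : ℝ) := by
    have := Int.toNat_of_nonneg (Rat.num_nonneg.mpr hr)
    exact_mod_cast congrArg (fun z : ℤ => (z : ℝ)) this
  have hcast : (r : ℝ) = (r.num.toNat : ℝ) / (r.den : ℝ) := by
    rw [hnum, Rat.cast_def]
  have hsq : Real.sqrt (r : ℝ) = Real.sqrt (r.num.toNat : ℝ) / Real.sqrt (r.den : ℝ) := by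
    rw [hcast, Real.sqrt_div (Nat.cast_nonneg _)]
  rw [hsq]
  push_cast
  exact Subfield.div_mem _ (sqrt_nat_mem lam _) (sqrt_nat_mem lam _)

theorem exp_mu_log_nat (lam : ℂ) (m : ℕ) (hm : 1 ≤ m) :
    Complex.exp ((-1 - lam) / 2 * ((Real.log m : ℝ) : ℂ)) ∈ Flam lam := by
  have hm0 : (0 : ℝ) < m := by exact_mod_cast hm
  set L : ℂ := ((Real.log m : ℝ) : ℂ)
  have hsplit : (-1 - lam) / 2 * L = -(L / 2) + -(lam / 2 * L) := by ring
  rw [hsplit, Complex.exp_add, Complex.exp_neg, Complex.exp_neg]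
  have h1 : Complex.exp (L / 2) = ((Real.sqrt m : ℝ) : ℂ) := by
    have h2 : Real.exp (Real.log m / 2) = Real.sqrt m := by
      rw [← Real.log_sqrt (le_of_lt hm0), Real.exp_log (Real.sqrt_pos.mpr hm0)]
    rw [← h2, Complex.ofReal_exp]
    norm_num [L]
  rw [h1]
  exact Subfield.mul_mem _ (Subfield.inv_mem _ (sqrt_nat_mem lam m))
    (Subfield.inv_mem _ (explog_mem lam m hm))

theorem Hval_mem (lam : ℂ) (r : ℚ) (hr : 0 < r) :
    ((Real.sqrt (r : ℝ) : ℝ) : ℂ) ^ (-1 - lam) ∈ Flam lam := by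
  have hr0 : (0 : ℝ) < (r : ℝ) := by exact_mod_cast hr
  have hs0 : (0 : ℝ) < Real.sqrt (r : ℝ) := Real.sqrt_pos.mpr hr0
  have hne : ((Real.sqrt (r : ℝ) : ℝ) : ℂ) ≠ 0 := by exact_mod_cast ne_of_gt hs0
  rw [Complex.cpow_def_of_ne_zero hne]
  have hlog : Complex.log ((Real.sqrt (r : ℝ) : ℝ) : ℂ) = ((Real.log (r : ℝ) / 2 : ℝ) : ℂ) := by
    rw [← Complex.ofReal_log (Real.sqrt_nonneg _), Real.log_sqrt (le_of_lt hr0)]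
  rw [hlog]
  -- r = m / n with m, n ≥ 1
  set m : ℕ := r.num.toNat
  have hm1 : 1 ≤ m := by
    have : 0 < r.num := Rat.num_pos.mpr hr
    omega
  have hn1 : 1 ≤ r.den := r.pos
  have hnum : ((m : ℕ) : ℝ) = (r.num : ℝ) := by
    have := Int.toNat_of_nonneg (le_of_lt (Rat.num_pos.mpr hr))
    exact_mod_cast congrArg (fun z : ℤ => (z : ℝ)) this
  have hcast : (r : ℝ) = (m : ℝ) / (r.den : ℝ) := by rw [hnum, Rat.cast_def]
  have hlogr : Real.log (r : ℝ) = Real.log m - Real.log r.den := by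
    rw [hcast, Real.log_div] <;> positivity
  have hsplit : ((Real.log (r : ℝ) / 2 : ℝ) : ℂ) * (-1 - lam) =
      (-1 - lam) / 2 * ((Real.log m : ℝ) : ℂ) - (-1 - lam) / 2 * ((Real.log r.den : ℝ) : ℂ) := by
    rw [hlogr]; push_cast; ring
  rw [hsplit, Complex.exp_sub]
  exact Subfield.div_mem _ (exp_mu_log_nat lam m hm1) (exp_mu_log_nat lam r.den hn1)

end AuxFlam2

section GeoTest
variable (γ : Matrix (Fin 2) (Fin 2) ℝ)

namespace AuxGeo

/-- First linear form. -/
def Xf (γ : Matrix (Fin 2) (Fin 2) ℝ) (θ : ℝ) : ℝ := γ 0 0 * Real.cos θ + γ 0 1 * Real.sin θ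
/-- Second linear form. -/
def Yf (γ : Matrix (Fin 2) (Fin 2) ℝ) (θ : ℝ) : ℝ := γ 1 0 * Real.cos θ + γ 1 1 * Real.sin θ
/-- `g = j²`. -/
def gF (γ : Matrix (Fin 2) (Fin 2) ℝ) (θ : ℝ) : ℝ := Xf γ θ ^ 2 + Yf γ θ ^ 2

theorem jmat_eq (θ : ℝ) : jmat γ θ = Real.sqrt (gF γ θ) := rfl

theorem gF_pos (hdet : 0 < γ.det) (θ : ℝ) : 0 < gF γ θ := by
  have hd : γ.det = γ 0 0 * γ 1 1 - γ 0 1 * γ 1 0 := Matrix.det_fin_two γ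
  rcases lt_or_ge 0 (gF γ θ) with h | h
  · exact h
  · exfalso
    have hg0 : gF γ θ = 0 := le_antisymm h (by rw [gF]; positivity)
    rw [gF] at hg0
    have hX2 : Xf γ θ ^ 2 ≤ 0 := by nlinarith [sq_nonneg (Yf γ θ)]
    have hY2 : Yf γ θ ^ 2 ≤ 0 := by nlinarith [sq_nonneg (Xf γ θ)]
    have hX : Xf γ θ = 0 :=
      (pow_eq_zero_iff (by norm_num)).mp (le_antisymm hX2 (sq_nonneg _))
    have hY : Yf γ θ = 0 :=
      (pow_eq_zero_iff (by norm_num)).mp (le_antisymm hY2 (sq_nonneg _))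
    have hpy := Real.sin_sq_add_cos_sq θ
    rw [Xf] at hX; rw [Yf] at hY
    have hc : γ.det * Real.cos θ = 0 := by rw [hd]; linear_combination γ 1 1 * hX - γ 0 1 * hY
    have hs : γ.det * Real.sin θ = 0 := by rw [hd]; linear_combination γ 0 0 * hY - γ 1 0 * hX
    have hc0 : Real.cos θ = 0 := by
      rcases mul_eq_zero.mp hc with h' | h'
      · exact absurd h' (ne_of_gt hdet)
      · exact h'
    have hs0 : Real.sin θ = 0 := by
      rcases mul_eq_zero.mp hs with h' | h'
      · exact absurd h' (ne_of_gt hdet)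
      · exact h'
    rw [hc0, hs0] at hpy
    norm_num at hpy

theorem jmat_pos (hdet : 0 < γ.det) (θ : ℝ) : 0 < jmat γ θ := by
  rw [jmat_eq]
  exact Real.sqrt_pos.mpr (gF_pos γ hdet θ)

theorem exists_isAct (hdet : 0 < γ.det) (θ : ℝ) : ∃ ψ, IsAct γ θ ψ := by
  have hj := jmat_pos γ hdet θ
  set z : ℂ := ⟨Xf γ θ, Yf γ θ⟩ with hz
  have hz0 : z ≠ 0 := by
    intro h
    have h1 : Xf γ θ = 0 := congrArg Complex.re h
    have h2 : Yf γ θ = 0 := congrArg Complex.im h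
    have := gF_pos γ hdet θ
    rw [gF, h1, h2] at this
    norm_num at this
  have habs : ‖z‖ = jmat γ θ := by
    rw [Complex.norm_def, Complex.normSq_apply, jmat_eq]
    show Real.sqrt (Xf γ θ * Xf γ θ + Yf γ θ * Yf γ θ) = _
    rw [gF]; ring_nf
  have hcos : Real.cos z.arg = Xf γ θ / jmat γ θ := by
    rw [Complex.cos_arg hz0, habs]
  have hsin : Real.sin z.arg = Yf γ θ / jmat γ θ := by
    rw [Complex.sin_arg, habs]
  have hXd : Xf γ θ / jmat γ θ = (γ 0 0 * Real.cos θ + γ 0 1 * Real.sin θ) / jmat γ θ := rfl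
  have hYd : Yf γ θ / jmat γ θ = (γ 1 0 * Real.cos θ + γ 1 1 * Real.sin θ) / jmat γ θ := rfl
  have hpi : z.arg ≤ Real.pi := Complex.arg_le_pi z
  have hnpi : -Real.pi < z.arg := Complex.neg_pi_lt_arg z
  rcases lt_or_ge z.arg 0 with hneg | hpos
  · refine ⟨z.arg + Real.pi, ⟨by linarith, by linarith⟩, -1, Or.inr rfl, ?_, ?_⟩
    · rw [Real.cos_add_pi, hcos]; simp only [Xf, Yf]; try ring
    · rw [Real.sin_add_pi, hsin]; simp only [Xf, Yf]; try ring
  · rcases lt_or_ge z.arg Real.pi with hlt | hge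
    · refine ⟨z.arg, ⟨hpos, hlt⟩, 1, Or.inl rfl, ?_, ?_⟩
      · rw [hcos]; simp only [Xf, Yf]; try ring
      · rw [hsin]; simp only [Xf, Yf]; try ring
    · have hargpi : z.arg = Real.pi := le_antisymm hpi hge
      refine ⟨0, ⟨le_refl 0, Real.pi_pos⟩, -1, Or.inr rfl, ?_, ?_⟩
      · rw [Real.cos_zero, ← hXd, ← hcos, hargpi, Real.cos_pi]; ring
      · rw [Real.sin_zero, ← hYd, ← hsin, hargpi, Real.sin_pi]; ring

theorem mact_isAct (hdet : 0 < γ.det) (θ : ℝ) : IsAct γ θ (mact γ θ) := by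
  rw [mact, dif_pos (exists_isAct γ hdet θ)]
  exact (exists_isAct γ hdet θ).choose_spec

theorem cos_two_mact (hdet : 0 < γ.det) (θ : ℝ) :
    Real.cos (2 * mact γ θ) = (Xf γ θ ^ 2 - Yf γ θ ^ 2) / gF γ θ := by
  obtain ⟨_, ε, hε, hc, hs⟩ := mact_isAct γ hdet θ
  have hj := jmat_pos γ hdet θ
  have hg := gF_pos γ hdet θ
  have hj2 : jmat γ θ ^ 2 = gF γ θ := by
    rw [jmat_eq]; exact Real.sq_sqrt (le_of_lt hg)
  have hε2 : ε ^ 2 = 1 := by rcases hε with h | h <;> rw [h] <;> norm_num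
  rw [Real.cos_two_mul, hc]
  have hXd : (γ 0 0 * Real.cos θ + γ 0 1 * Real.sin θ) = Xf γ θ := rfl
  rw [hXd]
  have hgXY : gF γ θ = Xf γ θ ^ 2 + Yf γ θ ^ 2 := rfl
  have step : 2 * (ε * (Xf γ θ / jmat γ θ)) ^ 2 - 1 = ε ^ 2 * (2 * Xf γ θ ^ 2 / jmat γ θ ^ 2) - 1 := by
    ring
  rw [step, hε2, hj2, one_mul, hgXY]
  have hgne : Xf γ θ ^ 2 + Yf γ θ ^ 2 ≠ 0 := by rw [← hgXY]; exact ne_of_gt hg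
  field_simp
  ring

theorem sin_two_mact (hdet : 0 < γ.det) (θ : ℝ) :
    Real.sin (2 * mact γ θ) = 2 * Xf γ θ * Yf γ θ / gF γ θ := by
  obtain ⟨_, ε, hε, hc, hs⟩ := mact_isAct γ hdet θ
  have hj := jmat_pos γ hdet θ
  have hg := gF_pos γ hdet θ
  have hj2 : jmat γ θ ^ 2 = gF γ θ := by
    rw [jmat_eq]; exact Real.sq_sqrt (le_of_lt hg)
  have hε2 : ε ^ 2 = 1 := by rcases hε with h | h <;> rw [h] <;> norm_num
  rw [Real.sin_two_mul, hc, hs]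
  have hXd : (γ 0 0 * Real.cos θ + γ 0 1 * Real.sin θ) = Xf γ θ := rfl
  have hYd : (γ 1 0 * Real.cos θ + γ 1 1 * Real.sin θ) = Yf γ θ := rfl
  rw [hXd, hYd]
  have step : 2 * (ε * (Yf γ θ / jmat γ θ)) * (ε * (Xf γ θ / jmat γ θ)) =
      ε ^ 2 * (2 * Xf γ θ * Yf γ θ / jmat γ θ ^ 2) := by ring
  rw [step, hε2, hj2, one_mul]

end AuxGeo
end GeoTest

namespace AuxGeo
open AuxFlam

/-- Derivative of `Xf`. -/
def dXf (γ : Matrix (Fin 2) (Fin 2) ℝ) (θ : ℝ) : ℝ := -(γ 0 0) * Real.sin θ + γ 0 1 * Real.cos θ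
/-- Derivative of `Yf`. -/
def dYf (γ : Matrix (Fin 2) (Fin 2) ℝ) (θ : ℝ) : ℝ := -(γ 1 0) * Real.sin θ + γ 1 1 * Real.cos θ
/-- Derivative of `gF`. -/
def dgF (γ : Matrix (Fin 2) (Fin 2) ℝ) (θ : ℝ) : ℝ :=
  2 * Xf γ θ * dXf γ θ + 2 * Yf γ θ * dYf γ θ

variable (γ : Matrix (Fin 2) (Fin 2) ℝ)

theorem hasDerivAt_Xf (θ : ℝ) : HasDerivAt (Xf γ) (dXf γ θ) θ := by
  have h := ((Real.hasDerivAt_cos θ).const_mul (γ 0 0)).add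
    ((Real.hasDerivAt_sin θ).const_mul (γ 0 1))
  refine h.congr_deriv ?_
  rw [dXf]; ring

theorem hasDerivAt_Yf (θ : ℝ) : HasDerivAt (Yf γ) (dYf γ θ) θ := by
  have h := ((Real.hasDerivAt_cos θ).const_mul (γ 1 0)).add
    ((Real.hasDerivAt_sin θ).const_mul (γ 1 1))
  refine h.congr_deriv ?_
  rw [dYf]; ring

theorem hasDerivAt_gF (θ : ℝ) : HasDerivAt (gF γ) (dgF γ θ) θ := by
  have h := ((hasDerivAt_Xf γ θ).pow 2).add ((hasDerivAt_Yf γ θ).pow 2)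
  refine h.congr_deriv ?_
  rw [dgF]; push_cast; ring

theorem contDiff_gF : ContDiff ℝ (⊤ : ℕ∞) (gF γ) := by
  have hX : ContDiff ℝ (⊤ : ℕ∞) (Xf γ) :=
    (contDiff_const.mul Real.contDiff_cos).add (contDiff_const.mul Real.contDiff_sin)
  have hY : ContDiff ℝ (⊤ : ℕ∞) (Yf γ) :=
    (contDiff_const.mul Real.contDiff_cos).add (contDiff_const.mul Real.contDiff_sin)
  exact (hX.pow 2).add (hY.pow 2)

variable {E : Subfield ℂ}

theorem Wp_congr {G : ℝ → ℝ} {f g : ℝ → ℂ} (h : f = g) (hf : Wp E G f) : Wp E G g := h ▸ hf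

theorem two_mem : ((2 : ℂ)) ∈ E := by
  have h := SubfieldClass.ratCast_mem E (2 : ℚ)
  exact_mod_cast h

theorem Wp_lin {G : ℝ → ℝ} (p q : ℝ) (hp : ((p : ℝ) : ℂ) ∈ E) (hq : ((q : ℝ) : ℂ) ∈ E) :
    Wp E G (fun θ => ((p * Real.cos θ + q * Real.sin θ : ℝ) : ℂ)) := by
  apply Wp_congr (f := fun θ =>
    (p : ℂ) * ((Real.cos θ : ℝ) : ℂ) + (q : ℂ) * ((Real.sin θ : ℝ) : ℂ))
  · funext θ; push_cast; ring
  · exact .add (.mul (.const _ hp) .cos) (.mul (.const _ hq) .sin)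

theorem Wp_X (hγE : ∀ i j, ((γ i j : ℝ) : ℂ) ∈ E) :
    Wp E (gF γ) (fun θ => ((Xf γ θ : ℝ) : ℂ)) := Wp_lin _ _ (hγE 0 0) (hγE 0 1)

theorem Wp_Y (hγE : ∀ i j, ((γ i j : ℝ) : ℂ) ∈ E) :
    Wp E (gF γ) (fun θ => ((Yf γ θ : ℝ) : ℂ)) := Wp_lin _ _ (hγE 1 0) (hγE 1 1)

theorem Wp_dX (hγE : ∀ i j, ((γ i j : ℝ) : ℂ) ∈ E) :
    Wp E (gF γ) (fun θ => ((dXf γ θ : ℝ) : ℂ)) :=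
  Wp_congr (by funext θ; rw [dXf]; norm_num; ring)
    (Wp_lin (γ 0 1) (-(γ 0 0)) (hγE 0 1)
      (by rw [Complex.ofReal_neg]; exact E.neg_mem (hγE 0 0)))

theorem Wp_dY (hγE : ∀ i j, ((γ i j : ℝ) : ℂ) ∈ E) :
    Wp E (gF γ) (fun θ => ((dYf γ θ : ℝ) : ℂ)) :=
  Wp_congr (by funext θ; rw [dYf]; norm_num; ring)
    (Wp_lin (γ 1 1) (-(γ 1 0)) (hγE 1 1)
      (by rw [Complex.ofReal_neg]; exact E.neg_mem (hγE 1 0)))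

theorem Wp_dgF (hγE : ∀ i j, ((γ i j : ℝ) : ℂ) ∈ E) :
    Wp E (gF γ) (fun θ => ((dgF γ θ : ℝ) : ℂ)) := by
  apply Wp_congr (f := fun θ =>
    (((2 : ℂ)) * ((Xf γ θ : ℝ) : ℂ)) * ((dXf γ θ : ℝ) : ℂ) +
    (((2 : ℂ)) * ((Yf γ θ : ℝ) : ℂ)) * ((dYf γ θ : ℝ) : ℂ))
  · funext θ; rw [dgF]; push_cast; ring
  · exact .add (.mul (.mul (.const _ two_mem) (Wp_X γ hγE)) (Wp_dX γ hγE))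
      (.mul (.mul (.const _ two_mem) (Wp_Y γ hγE)) (Wp_dY γ hγE))

theorem Wp_cos_sin_mact (hdet : 0 < γ.det) (hγE : ∀ i j, ((γ i j : ℝ) : ℂ) ∈ E) (k : ℕ) :
    Wp E (gF γ) (fun θ => ((Real.cos (2 * k * mact γ θ) : ℝ) : ℂ)) ∧
    Wp E (gF γ) (fun θ => ((Real.sin (2 * k * mact γ θ) : ℝ) : ℂ)) := by
  have hc1 : Wp E (gF γ) (fun θ => ((Real.cos (2 * mact γ θ) : ℝ) : ℂ)) := by
    apply Wp_congr (f := fun θ =>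
      (((Xf γ θ : ℝ) : ℂ) * ((Xf γ θ : ℝ) : ℂ) +
        ((-1 : ℂ)) * (((Yf γ θ : ℝ) : ℂ) * ((Yf γ θ : ℝ) : ℂ))) * ((gF γ θ : ℝ) : ℂ)⁻¹)
    · funext θ
      rw [cos_two_mact γ hdet θ, div_eq_mul_inv]
      push_cast
      ring
    · exact .mul (.add (.mul (Wp_X γ hγE) (Wp_X γ hγE))
        (.mul (.const _ (E.neg_mem E.one_mem)) (.mul (Wp_Y γ hγE) (Wp_Y γ hγE)))) .ginv
  have hs1 : Wp E (gF γ) (fun θ => ((Real.sin (2 * mact γ θ) : ℝ) : ℂ)) := by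
    apply Wp_congr (f := fun θ =>
      ((((2 : ℂ)) * ((Xf γ θ : ℝ) : ℂ)) * ((Yf γ θ : ℝ) : ℂ)) * ((gF γ θ : ℝ) : ℂ)⁻¹)
    · funext θ
      rw [sin_two_mact γ hdet θ, div_eq_mul_inv]
      push_cast
      ring
    · exact .mul (.mul (.mul (.const _ two_mem) (Wp_X γ hγE)) (Wp_Y γ hγE)) .ginv
  induction k with
  | zero =>
    constructor
    · apply Wp_congr (f := fun _ : ℝ => (1 : ℂ))
      · funext θ; norm_num
      · exact .const 1 E.one_mem
    · apply Wp_congr (f := fun _ : ℝ => (0 : ℂ))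
      · funext θ; norm_num
      · exact .const 0 E.zero_mem
  | succ k ih =>
    obtain ⟨ihc, ihs⟩ := ih
    have harg : ∀ θ, 2 * ((k + 1 : ℕ) : ℝ) * mact γ θ =
        2 * k * mact γ θ + 2 * mact γ θ := by
      intro θ; push_cast; ring
    constructor
    · apply Wp_congr (f := fun θ =>
        ((Real.cos (2 * k * mact γ θ) : ℝ) : ℂ) * ((Real.cos (2 * mact γ θ) : ℝ) : ℂ) +
        ((-1 : ℂ)) * (((Real.sin (2 * k * mact γ θ) : ℝ) : ℂ) *
          ((Real.sin (2 * mact γ θ) : ℝ) : ℂ)))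
      · funext θ
        rw [harg θ, Real.cos_add]
        push_cast
        ring
      · exact .add (.mul ihc hc1) (.mul (.const _ (E.neg_mem E.one_mem)) (.mul ihs hs1))
    · apply Wp_congr (f := fun θ =>
        ((Real.sin (2 * k * mact γ θ) : ℝ) : ℂ) * ((Real.cos (2 * mact γ θ) : ℝ) : ℂ) +
        ((Real.cos (2 * k * mact γ θ) : ℝ) : ℂ) * ((Real.sin (2 * mact γ θ) : ℝ) : ℂ))
      · funext θ
        rw [harg θ, Real.sin_add]
        push_cast
        ring
      · exact .add (.mul ihs hc1) (.mul ihc hs1)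

end AuxGeo

namespace AuxMain
open AuxFlam AuxFlam2 AuxGeo

theorem cos_sin_theta0_mem (lam : ℂ) (θ₀ : ℝ) (hθ : θ₀ ∈ Xi) :
    ((Real.cos θ₀ : ℝ) : ℂ) ∈ Flam lam ∧ ((Real.sin θ₀ : ℝ) : ℂ) ∈ Flam lam := by
  have hpy := Real.sin_sq_add_cos_sq θ₀
  rcases hθ with hsin | ⟨hsin, q, hq⟩
  · constructor
    · have hc2 : Real.cos θ₀ ^ 2 = 1 := by rw [hsin] at hpy; linarith
      have : (Real.cos θ₀ - 1) * (Real.cos θ₀ + 1) = 0 := by nlinarith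
      rcases mul_eq_zero.mp this with h | h
      · have : Real.cos θ₀ = 1 := by linarith
        rw [this]; exact_mod_cast (Flam lam).one_mem
      · have : Real.cos θ₀ = -1 := by linarith
        rw [this]
        push_cast
        exact (Flam lam).neg_mem (Flam lam).one_mem
    · rw [hsin]; exact_mod_cast (Flam lam).zero_mem
  · have hqc : Real.cos θ₀ = (q : ℝ) * Real.sin θ₀ := by
      field_simp at hq
      linarith [hq]
    set ρ : ℚ := 1 / (q ^ 2 + 1) with hρ
    have hq21 : (0 : ℚ) < q ^ 2 + 1 := by positivity
    have hρpos : 0 < ρ := by rw [hρ]; positivity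
    have hsin2 : Real.sin θ₀ ^ 2 = (ρ : ℝ) := by
      have h1 : ((q : ℝ) ^ 2 + 1) * Real.sin θ₀ ^ 2 = 1 := by
        rw [hqc] at hpy; ring_nf; ring_nf at hpy; linarith
      have h2 : ((q : ℝ) ^ 2 + 1) ≠ 0 := by positivity
      rw [hρ]
      push_cast
      field_simp
      linarith
    have habs : |Real.sin θ₀| = Real.sqrt (ρ : ℝ) := by
      rw [← Real.sqrt_sq_eq_abs, hsin2]
    have hsmem : ((Real.sin θ₀ : ℝ) : ℂ) ∈ Flam lam := by
      rcases abs_cases (Real.sin θ₀) with ⟨h1, _⟩ | ⟨h1, _⟩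
      · rw [← h1, habs]; exact sqrt_rat_mem lam ρ (le_of_lt hρpos)
      · have : Real.sin θ₀ = -Real.sqrt (ρ : ℝ) := by rw [← habs, h1]; ring
        rw [this]
        push_cast
        exact (Flam lam).neg_mem (sqrt_rat_mem lam ρ (le_of_lt hρpos))
    refine ⟨?_, hsmem⟩
    rw [hqc, Complex.ofReal_mul]
    exact (Flam lam).mul_mem (by
      rw [Complex.ofReal_ratCast]
      exact SubfieldClass.ratCast_mem (Flam lam) q) hsmem

theorem gF_theta0_rat (γq : Matrix (Fin 2) (Fin 2) ℚ) (θ₀ : ℝ) (hθ : θ₀ ∈ Xi) :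
    ∃ r : ℚ, gF (γq.map (fun x => (x : ℝ))) θ₀ = (r : ℝ) := by
  set γ := γq.map (fun x => (x : ℝ)) with hγ
  have hent : ∀ i j, γ i j = ((γq i j : ℚ) : ℝ) := fun i j => rfl
  have hpy := Real.sin_sq_add_cos_sq θ₀
  rw [gF, Xf, Yf, hent 0 0, hent 0 1, hent 1 0, hent 1 1]
  rcases hθ with hsin | ⟨hsin, q, hq⟩
  · refine ⟨γq 0 0 ^ 2 + γq 1 0 ^ 2, ?_⟩
    have hc2 : Real.cos θ₀ ^ 2 = 1 := by rw [hsin] at hpy; linarith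
    rw [hsin]
    push_cast
    linear_combination (((γq 0 0 : ℝ)) ^ 2 + ((γq 1 0 : ℝ)) ^ 2) * hc2
  · have hqc : Real.cos θ₀ = (q : ℝ) * Real.sin θ₀ := by
      field_simp at hq
      linarith [hq]
    set ρ : ℚ := 1 / (q ^ 2 + 1) with hρ
    have hsin2 : Real.sin θ₀ ^ 2 = (ρ : ℝ) := by
      have h1 : ((q : ℝ) ^ 2 + 1) * Real.sin θ₀ ^ 2 = 1 := by
        rw [hqc] at hpy; ring_nf; ring_nf at hpy; linarith
      rw [hρ]
      push_cast
      field_simp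
      linarith
    refine ⟨((γq 0 0 * q + γq 0 1) ^ 2 + (γq 1 0 * q + γq 1 1) ^ 2) * ρ, ?_⟩
    rw [hqc]
    push_cast
    linear_combination (((γq 0 0 : ℝ) * q + γq 0 1) ^ 2 + ((γq 1 0 : ℝ) * q + γq 1 1) ^ 2) * hsin2

end AuxMain

namespace AuxMain2
open AuxFlam AuxFlam2 AuxGeo Complex

theorem Hc_eq (γ : Matrix (Fin 2) (Fin 2) ℝ) (hdet : 0 < γ.det) (lam : ℂ) :
    (fun θ => ((jmat γ θ : ℝ) : ℂ) ^ (-1 - lam)) =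
      fun θ => Complex.exp ((-1 - lam) / 2 * ((Real.log (gF γ θ) : ℝ) : ℂ)) := by
  funext θ
  have hg := gF_pos γ hdet θ
  have hj := jmat_pos γ hdet θ
  have hne : ((jmat γ θ : ℝ) : ℂ) ≠ 0 := by exact_mod_cast ne_of_gt hj
  rw [Complex.cpow_def_of_ne_zero hne]
  have hlog : Complex.log ((jmat γ θ : ℝ) : ℂ) = ((Real.log (gF γ θ) / 2 : ℝ) : ℂ) := by
    rw [← Complex.ofReal_log (le_of_lt hj), jmat_eq, Real.log_sqrt (le_of_lt hg)]
  rw [hlog]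
  congr 1
  push_cast
  ring

theorem hasDerivAt_Hc (γ : Matrix (Fin 2) (Fin 2) ℝ) (hdet : 0 < γ.det) (lam : ℂ) (θ : ℝ) :
    HasDerivAt (fun θ => ((jmat γ θ : ℝ) : ℂ) ^ (-1 - lam))
      (((-1 - lam) / 2 * ((dgF γ θ : ℝ) : ℂ) * ((gF γ θ : ℝ) : ℂ)⁻¹) *
        ((jmat γ θ : ℝ) : ℂ) ^ (-1 - lam)) θ := by
  have hval : ∀ t, ((jmat γ t : ℝ) : ℂ) ^ (-1 - lam) =
      Complex.exp ((-1 - lam) / 2 * ((Real.log (gF γ t) : ℝ) : ℂ)) :=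
    fun t => congrFun (Hc_eq γ hdet lam) t
  rw [Hc_eq γ hdet lam, hval θ]
  have hg := gF_pos γ hdet
  have hlog : HasDerivAt (fun θ => Real.log (gF γ θ)) ((gF γ θ)⁻¹ * dgF γ θ) θ :=
    (Real.hasDerivAt_log (ne_of_gt (hg θ))).comp θ (hasDerivAt_gF γ θ)
  have h1 : HasDerivAt (fun θ => (-1 - lam) / 2 * ((Real.log (gF γ θ) : ℝ) : ℂ))
      ((-1 - lam) / 2 * (((gF γ θ)⁻¹ * dgF γ θ : ℝ) : ℂ)) θ :=
    (hlog.ofReal_comp).const_mul ((-1 - lam) / 2)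
  have h2 := h1.cexp
  convert h2 using 1
  push_cast
  ring

theorem ABq_swap (k : ℕ) (j : ℕ) :
    ABq k (0, 1) j = (-(ABq k (1, 0) j).2, (ABq k (1, 0) j).1) := by
  induction j with
  | zero => simp [ABq]
  | succ j ih =>
    have h1 : ABq k (0, 1) (j + 1) =
        ((ABq k (0, 1) j).1 + 2 * k * (ABq k (0, 1) j).2,
         (ABq k (0, 1) j).2 - 2 * k * (ABq k (0, 1) j).1) := rfl
    have h2 : ABq k (1, 0) (j + 1) =
        ((ABq k (1, 0) j).1 + 2 * k * (ABq k (1, 0) j).2,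
         (ABq k (1, 0) j).2 - 2 * k * (ABq k (1, 0) j).1) := rfl
    rw [h1, h2, ih]
    simp only [Prod.mk.injEq]
    constructor <;> ring

/-- The test functions. -/
def tf (k : ℕ) (P : ℚ × ℚ) : ℝ → ℂ := fun ψ =>
  ((P.1 : ℂ)) * ((Real.cos (2 * k * ψ) : ℝ) : ℂ) + ((P.2 : ℂ)) * ((Real.sin (2 * k * ψ) : ℝ) : ℂ)

theorem tf_contDiff (k : ℕ) (P : ℚ × ℚ) : ContDiff ℝ (⊤ : ℕ∞) (tf k P) := by
  have hlin : ContDiff ℝ (⊤ : ℕ∞) (fun ψ : ℝ => 2 * (k : ℝ) * ψ) := contDiff_const.mul contDiff_id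
  have hc : ContDiff ℝ (⊤ : ℕ∞) (fun ψ : ℝ => ((Real.cos (2 * k * ψ) : ℝ) : ℂ)) :=
    Complex.ofRealCLM.contDiff.comp (Real.contDiff_cos.comp hlin)
  have hs : ContDiff ℝ (⊤ : ℕ∞) (fun ψ : ℝ => ((Real.sin (2 * k * ψ) : ℝ) : ℂ)) :=
    Complex.ofRealCLM.contDiff.comp (Real.contDiff_sin.comp hlin)
  exact (contDiff_const.mul hc).add (contDiff_const.mul hs)

theorem tf_periodic (k : ℕ) (P : ℚ × ℚ) : Function.Periodic (tf k P) Real.pi := by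
  intro ψ
  have harg : 2 * (k : ℝ) * (ψ + Real.pi) = 2 * k * ψ + (k : ℤ) * (2 * Real.pi) := by
    push_cast; ring
  rw [tf, tf]
  simp only [harg, Real.cos_add_int_mul_two_pi, Real.sin_add_int_mul_two_pi]

end AuxMain2

open AuxFlam AuxFlam2 AuxGeo AuxMain AuxMain2 Complex in
/-- For `γ ∈ GL₂⁺(ℚ)`, the values of the functions `u_j` at points of `Ξ` lie in `F_λ`. -/
theorem goodTuple_values_mem_Flam (lam : ℂ) (s : ℕ) (γ : Matrix (Fin 2) (Fin 2) ℚ)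
    (hγ : 0 < γ.det) (u : Fin (s + 1) → ℝ → ℂ)
    (hu : GoodTuple lam (γ.map (fun q => (q : ℝ))) s u)
    (θ₀ : ℝ) (hθ : θ₀ ∈ Xi) (j : Fin (s + 1)) :
    u j θ₀ ∈ Flam lam := by
  classical
  set γr : Matrix (Fin 2) (Fin 2) ℝ := γ.map (fun q => (q : ℝ)) with hγr
  set E : Subfield ℂ := Flam lam with hE
  -- determinant positivity
  have hdetr : γr.det = ((γ.det : ℚ) : ℝ) := by
    rw [Matrix.det_fin_two, Matrix.det_fin_two]
    simp only [hγr, Matrix.map_apply]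
    push_cast
    ring
  have hdet : 0 < γr.det := by rw [hdetr]; exact_mod_cast hγ
  have hG0 : ∀ θ, gF γr θ ≠ 0 := fun θ => ne_of_gt (gF_pos γr hdet θ)
  -- entries of γr are in E
  have hγE : ∀ i j, ((γr i j : ℝ) : ℂ) ∈ E := by
    intro i j
    have : γr i j = ((γ i j : ℚ) : ℝ) := rfl
    rw [this, Complex.ofReal_ratCast]
    exact SubfieldClass.ratCast_mem E (γ i j)
  -- basic values at θ₀
  obtain ⟨hcos0, hsin0⟩ := cos_sin_theta0_mem lam θ₀ hθ
  obtain ⟨r, hrq⟩ := gF_theta0_rat γ θ₀ hθ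
  have hrq' : gF γr θ₀ = (r : ℝ) := hrq
  have hrpos : 0 < r := by
    have := gF_pos γr hdet θ₀
    rw [hrq'] at this
    exact_mod_cast this
  have hginv0 : ((gF γr θ₀ : ℝ) : ℂ)⁻¹ ∈ E := by
    rw [hrq', Complex.ofReal_ratCast]
    exact E.inv_mem (SubfieldClass.ratCast_mem E r)
  have hHc0 : ((jmat γr θ₀ : ℝ) : ℂ) ^ (-1 - lam) ∈ E := by
    rw [jmat_eq, hrq']
    exact Hval_mem lam r hrpos
  -- constants
  set K : ℂ := ((γr.det : ℝ) : ℂ) ^ (1 + lam / 2) with hKdef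
  have hK : K ≠ 0 := by
    intro h
    rw [hKdef, Complex.cpow_eq_zero_iff] at h
    have : ((γr.det : ℝ) : ℂ) ≠ 0 := by exact_mod_cast ne_of_gt hdet
    exact this h.1
  have hμ : (-1 - lam) / 2 ∈ E := by
    refine E.div_mem (E.sub_mem (E.neg_mem E.one_mem) (lam_mem lam)) two_mem
  set m : ℝ → ℂ := fun θ => (-1 - lam) / 2 * ((dgF γr θ : ℝ) : ℂ) * ((gF γr θ : ℝ) : ℂ)⁻¹
    with hmdef
  have hm : Wp E (gF γr) m :=
    .mul (.mul (.const _ hμ) (Wp_dgF γr hγE)) .ginv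
  set Hc : ℝ → ℂ := fun θ => ((jmat γr θ : ℝ) : ℂ) ^ (-1 - lam) with hHcdef
  have hH : ∀ θ, HasDerivAt Hc (m θ * Hc θ) θ := fun θ => hasDerivAt_Hc γr hdet lam θ
  set ψ₀ : ℝ := mact γr θ₀ with hψ₀
  set Ck : ℕ → ℂ := fun k => ((Real.cos (2 * k * ψ₀) : ℝ) : ℂ) with hCk
  set Sk : ℕ → ℂ := fun k => ((Real.sin (2 * k * ψ₀) : ℝ) : ℂ) with hSk
  have hCkE : ∀ k : ℕ, Ck k ∈ E :=
    fun k => Wp.value hcos0 hsin0 hginv0 (Wp_cos_sin_mact γr hdet hγE k).1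
  have hSkE : ∀ k : ℕ, Sk k ∈ E :=
    fun k => Wp.value hcos0 hsin0 hginv0 (Wp_cos_sin_mact γr hdet hγE k).2
  -- the key family of equations
  have mainEq : ∀ (k : ℕ) (P : ℚ × ℚ),
      (∑ i : Fin (s + 1), u i θ₀ *
        (((ABq k P (i : ℕ)).1 : ℂ) * Ck k + ((ABq k P (i : ℕ)).2 : ℂ) * Sk k)) ∈ E := by
    intro k P
    have hW : Wp E (gF γr) (fun θ => tf k P (mact γr θ)) := by
      apply Wp_congr (f := fun θ =>
        ((P.1 : ℂ)) * ((Real.cos (2 * k * mact γr θ) : ℝ) : ℂ) +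
        ((P.2 : ℂ)) * ((Real.sin (2 * k * mact γr θ) : ℝ) : ℂ))
      · rfl
      · exact .add
          (.mul (.const _ (by exact_mod_cast SubfieldClass.ratCast_mem E P.1))
            (Wp_cos_sin_mact γr hdet hγE k).1)
          (.mul (.const _ (by exact_mod_cast SubfieldClass.ratCast_mem E P.2))
            (Wp_cos_sin_mact γr hdet hγE k).2)
    obtain ⟨v, hv, hpd⟩ := pd_iterate (contDiff_gF γr) hG0 (hasDerivAt_gF γr)
      (Wp_dgF γr hγE) hm hH K s hW
    have hslash : slash lam γr (tf k P) =
        fun θ => K * (Hc θ * tf k P (mact γr θ)) := by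
      funext θ
      show ((γr.det : ℝ) : ℂ) ^ (1 + lam / 2) * ((jmat γr θ : ℝ) : ℂ) ^ (-1 - lam) *
        tf k P (mact γr θ) = _
      rw [hKdef, hHcdef]
      ring
    have hL : pd^[s] (slash lam γr (tf k P)) θ₀ = K * (Hc θ₀ * v θ₀) := by
      rw [hslash, hpd]
    have heq := (hu.2 (tf k P) (tf_contDiff k P) (tf_periodic k P) θ₀)
    rw [hL] at heq
    have hsum := mul_left_cancel₀ hK heq
    have hpdj : ∀ i : ℕ, (pd^[i] (tf k P)) ψ₀ =
        ((ABq k P i).1 : ℂ) * Ck k + ((ABq k P i).2 : ℂ) * Sk k :=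
      fun i => congrFun (pd_iter_trig k P i) ψ₀
    rw [Finset.sum_congr rfl (fun i _ => by rw [hpdj (i : ℕ)])] at hsum
    rw [← hsum]
    exact E.mul_mem hHc0 (Wp.value hcos0 hsin0 hginv0 hv)
  -- assemble the linear system
  set x : Fin (s + 1) → ℂ := fun i => u i θ₀ with hx
  set M : Matrix (Fin (s + 1) ⊕ Fin (s + 1)) (Fin (s + 1)) ℂ := fun p i =>
    Sum.elim
      (fun k : Fin (s + 1) =>
        ((ABq (k : ℕ) (1, 0) (i : ℕ)).1 : ℂ) * Ck (k : ℕ) +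
          ((ABq (k : ℕ) (1, 0) (i : ℕ)).2 : ℂ) * Sk (k : ℕ))
      (fun k : Fin (s + 1) =>
        ((ABq (k : ℕ) (0, 1) (i : ℕ)).1 : ℂ) * Ck (k : ℕ) +
          ((ABq (k : ℕ) (0, 1) (i : ℕ)).2 : ℂ) * Sk (k : ℕ)) p
    with hM
  have hMmem : ∀ p i, M p i ∈ E := by
    rintro (k | k) i <;>
      exact E.add_mem
        (E.mul_mem (by exact_mod_cast SubfieldClass.ratCast_mem E _) (hCkE _))
        (E.mul_mem (by exact_mod_cast SubfieldClass.ratCast_mem E _) (hSkE _))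
  have hxmem : ∀ p, M.mulVec x p ∈ E := by
    rintro (k | k)
    · have h1 := mainEq (k : ℕ) (1, 0)
      have h2 : M.mulVec x (Sum.inl k) = ∑ i : Fin (s + 1), u i θ₀ *
          (((ABq (k : ℕ) (1, 0) (i : ℕ)).1 : ℂ) * Ck (k : ℕ) +
            ((ABq (k : ℕ) (1, 0) (i : ℕ)).2 : ℂ) * Sk (k : ℕ)) := by
        rw [Matrix.mulVec, dotProduct]
        exact Finset.sum_congr rfl fun i _ => by rw [hM]; simp [mul_comm, hx]
      rw [h2]; exact h1
    · have h1 := mainEq (k : ℕ) (0, 1)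
      have h2 : M.mulVec x (Sum.inr k) = ∑ i : Fin (s + 1), u i θ₀ *
          (((ABq (k : ℕ) (0, 1) (i : ℕ)).1 : ℂ) * Ck (k : ℕ) +
            ((ABq (k : ℕ) (0, 1) (i : ℕ)).2 : ℂ) * Sk (k : ℕ)) := by
        rw [Matrix.mulVec, dotProduct]
        exact Finset.sum_congr rfl fun i _ => by rw [hM]; simp [mul_comm, hx]
      rw [h2]; exact h1
  -- injectivity of the system
  have hinj : ∀ y : Fin (s + 1) → ℂ, M.mulVec y = 0 → y = 0 := by
    intro y hy
    have hexp : ∀ k : ℕ, Ck k + I * Sk k ≠ 0 := by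
      intro k
      have : Ck k + I * Sk k = Complex.exp (((2 * k * ψ₀ : ℝ) : ℂ) * I) := by
        rw [Complex.exp_mul_I, hCk, hSk]
        rw [← Complex.ofReal_cos, ← Complex.ofReal_sin]
        ring
      rw [this]
      exact Complex.exp_ne_zero _
    apply vandermonde_inj (fun k : Fin (s + 1) => 1 + 2 * (k : ℕ) * I)
    · intro a b hab
      have h1 : ((2 : ℂ) * (a : ℕ) * I).im = ((2 : ℂ) * (b : ℕ) * I).im := by
        have := congrArg Complex.im hab
        simpa using this
      have h2 : (2 : ℝ) * (a : ℕ) = 2 * (b : ℕ) := by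
        simpa using h1
      have : (a : ℕ) = (b : ℕ) := by exact_mod_cast (by linarith : ((a : ℕ) : ℝ) = (b : ℕ))
      exact Fin.ext this
    · intro k
      have h1 := congrFun hy (Sum.inl k)
      have h2 := congrFun hy (Sum.inr k)
      rw [Pi.zero_apply] at h1 h2
      rw [Matrix.mulVec, dotProduct] at h1 h2
      have hcomb : ∀ i : Fin (s + 1),
          M (Sum.inl k) i + I * M (Sum.inr k) i =
            (1 + 2 * (k : ℕ) * I) ^ (i : ℕ) * (Ck (k : ℕ) + I * Sk (k : ℕ)) := by
        intro i
        rw [hM]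
        simp only [Sum.elim_inl, Sum.elim_inr]
        rw [ABq_swap]
        have hc := ABq_complex (k : ℕ) (1, 0) (i : ℕ)
        simp only [Rat.cast_one, Rat.cast_zero, mul_zero, sub_zero, one_mul] at hc
        push_cast
        rw [← hc]
        ring_nf
        linear_combination (((ABq (k : ℕ) (1, 0) (i : ℕ)).2 : ℂ) * Sk (k : ℕ)) * Complex.I_sq
      have hkey : ∑ i : Fin (s + 1),
          (1 + 2 * (k : ℕ) * I) ^ (i : ℕ) * (Ck (k : ℕ) + I * Sk (k : ℕ)) * y i = 0 := by
        have : ∑ i : Fin (s + 1),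
            (1 + 2 * (k : ℕ) * I) ^ (i : ℕ) * (Ck (k : ℕ) + I * Sk (k : ℕ)) * y i =
            (∑ i : Fin (s + 1), M (Sum.inl k) i * y i) +
              I * ∑ i : Fin (s + 1), M (Sum.inr k) i * y i := by
          rw [Finset.mul_sum, ← Finset.sum_add_distrib]
          exact Finset.sum_congr rfl fun i _ => by rw [← hcomb i]; ring
        rw [this, h1, h2]
        ring
      have hfact : (Ck (k : ℕ) + I * Sk (k : ℕ)) *
          ∑ i : Fin (s + 1), (1 + 2 * (k : ℕ) * I) ^ (i : ℕ) * y i = 0 := by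
        rw [Finset.mul_sum, ← hkey]
        exact Finset.sum_congr rfl fun i _ => by ring
      rcases mul_eq_zero.mp hfact with h | h
      · exact absurd h (hexp (k : ℕ))
      · exact h
  have := mem_of_linear_system M hMmem hinj x hxmem j
  exact this

end
end
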